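/- arXiv:2305.15291 — 6 statements merged into one kernel-verified Lean document; each statement's English description precedes it below -/
import Mathlib

section
/- Let S be a finite multiset of colored items with colors in {1,…,Q}, and let q* be a critical color of S. The following three conditions are equivalent: (1) S admits a color-alternating permutation; (2) |S_{q*}| ≤ ⌈|S|/2⌉; (3) the color discrepancy of S satisfies δ ≤ 1. -/
/-- Number of items of color `q` in the multiset `S`. -/
def countColor {α : Type*} (color : α → ℕ) (S : Multiset α) (q : ℕ) : ℕ :=
  (S.filter (fun x => color x = q)).card

/-- Discrepancy of color `q` in `S`: `|S_q| − (|S| − |S_q|)`. -/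
def delta {α : Type*} (color : α → ℕ) (S : Multiset α) (q : ℕ) : ℤ :=
  (countColor color S q : ℤ) - ((Multiset.card S : ℤ) - (countColor color S q : ℤ))

/-- `S` admits a color-alternating permutation: a list with exactly the elements of `S`
(with multiplicity) in which no two consecutive items have the same color. -/
def HasAlternatingPerm {α : Type*} (color : α → ℕ) (S : Multiset α) : Prop :=
  ∃ l : List α, (l : Multiset α) = S ∧ List.Chain' (fun a b => color a ≠ color b) l

lemma countColor_cons {α : Type*} (color : α → ℕ) (x : α) (S : Multiset α) (q : ℕ) :
    countColor color (x ::ₘ S) q = countColor color S q + if color x = q then 1 else 0 := by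
  simp only [countColor, Multiset.filter_cons]
  split <;> simp [add_comm]

lemma countColor_le_card {α : Type*} (color : α → ℕ) (S : Multiset α) (q : ℕ) :
    countColor color S q ≤ Multiset.card S :=
  Multiset.card_le_card (Multiset.filter_le _ _)

lemma countColor_add_le {α : Type*} (color : α → ℕ) (S : Multiset α) {p q : ℕ} (h : p ≠ q) :
    countColor color S p + countColor color S q ≤ Multiset.card S := by
  have hd := Multiset.filter_add_filter (fun x => color x = p) (fun x => color x = q) S
  have h0 : Multiset.filter (fun x => color x = p ∧ color x = q) S = 0 := by
    rw [Multiset.filter_eq_nil]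
    rintro a _ ⟨h1, h2⟩; exact h (h1 ▸ h2)
  have h1 := congrArg Multiset.card hd
  rw [h0, add_zero, Multiset.card_add] at h1
  have h2 : Multiset.card (Multiset.filter (fun x => color x = p ∨ color x = q) S)
      ≤ Multiset.card S := Multiset.card_le_card (Multiset.filter_le _ _)
  simp only [countColor]
  omega

lemma countColor_pos {α : Type*} (color : α → ℕ) (S : Multiset α) {q : ℕ}
    (h : 0 < countColor color S q) : ∃ x ∈ S, color x = q := by
  obtain ⟨x, hx⟩ := Multiset.card_pos_iff_exists_mem.mp h
  rw [Multiset.mem_filter] at hx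
  exact ⟨x, hx.1, hx.2⟩

/-- Key construction: if every color other than the forbidden color `c` has count at most
`⌈n/2⌉` and `c` has count at most `⌊n/2⌋`, then there is an alternating arrangement whose
head avoids color `c`. -/
lemma key_lemma {α : Type*} (color : α → ℕ) :
    ∀ n (S : Multiset α), Multiset.card S = n → ∀ c : ℕ,
      (∀ q, q ≠ c → 2 * countColor color S q ≤ n + 1) →
      2 * countColor color S c ≤ n →
      ∃ l : List α, (l : Multiset α) = S ∧ List.Chain' (fun a b => color a ≠ color b) l ∧
        ∀ a ∈ l.head?, color a ≠ c := by
  classical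
  intro n
  induction n using Nat.strong_induction_on with
  | _ n ih =>
    intro S hcard c hothers hc
    rcases Nat.eq_zero_or_pos n with hn0 | hn
    · refine ⟨[], ?_, List.isChain_nil, by simp⟩
      have : S = 0 := Multiset.card_eq_zero.mp (hcard.trans hn0)
      simp [this]
    -- find an element of color ≠ c
    have hex : ∃ x ∈ S, color x ≠ c := by
      by_contra hcon
      push_neg at hcon
      have : Multiset.filter (fun x => color x = c) S = S := by
        rw [Multiset.filter_eq_self]; exact hcon
      have : countColor color S c = n := by rw [countColor, this, hcard]
      omega
    obtain ⟨x0, hx0S, hx0c⟩ := hex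
    -- the finset of colors present in S other than c
    set T : Finset ℕ := ((S.filter (fun y => color y ≠ c)).map color).toFinset with hT
    have hmemT : ∀ p, p ∈ T ↔ ∃ y ∈ S, color y ≠ c ∧ color y = p := by
      intro p
      simp only [hT, Multiset.mem_toFinset, Multiset.mem_map, Multiset.mem_filter]
      constructor
      · rintro ⟨y, ⟨hy1, hy2⟩, hy3⟩; exact ⟨y, hy1, hy2, hy3⟩
      · rintro ⟨y, hy1, hy2, hy3⟩; exact ⟨y, ⟨hy1, hy2⟩, hy3⟩
    have hTne : T.Nonempty := ⟨color x0, (hmemT _).mpr ⟨x0, hx0S, hx0c, rfl⟩⟩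
    obtain ⟨q, hqT, hqmax⟩ := Finset.exists_max_image T (countColor color S) hTne
    obtain ⟨y, hyS, hyc, hyq⟩ := (hmemT q).mp hqT
    have hqc : q ≠ c := hyq ▸ hyc
    -- remove y from S
    set S' := S.erase y with hS'
    have hcons : y ::ₘ S' = S := Multiset.cons_erase hyS
    have hcard' : Multiset.card S' = n - 1 := by
      have := congrArg Multiset.card hcons
      rw [Multiset.card_cons] at this
      omega
    have hcnt : ∀ p, countColor color S p
        = countColor color S' p + if color y = p then 1 else 0 := by
      intro p
      conv_lhs => rw [← hcons]
      exact countColor_cons color y S' p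
    have hqpos : 1 ≤ countColor color S q := by
      have := hcnt q
      rw [if_pos hyq] at this
      omega
    -- new invariants for S' with forbidden color q
    have hinv1 : ∀ p, p ≠ q → 2 * countColor color S' p ≤ (n - 1) + 1 := by
      intro p hpq
      have heq : countColor color S' p = countColor color S p := by
        have := hcnt p
        rw [if_neg (show color y ≠ p by rw [hyq]; exact Ne.symm hpq)] at this
        omega
      rw [heq]
      have hn1 : (n - 1) + 1 = n := by omega
      rw [hn1]
      rcases eq_or_ne p c with rfl | hpc
      · exact hc
      · rcases Nat.eq_zero_or_pos (countColor color S p) with h0 | hpos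
        · omega
        · obtain ⟨z, hzS, hzp⟩ := countColor_pos color S hpos
          have hpT : p ∈ T := (hmemT p).mpr ⟨z, hzS, hzp ▸ hpc, hzp⟩
          have h1 : countColor color S p ≤ countColor color S q := hqmax p hpT
          have h2 := countColor_add_le color S hpq
          omega
    have hinv2 : 2 * countColor color S' q ≤ n - 1 := by
      have := hcnt q
      rw [if_pos hyq] at this
      have := hothers q hqc
      omega
    obtain ⟨l', hl'S, hl'chain, hl'head⟩ :=
      ih (n - 1) (by omega) S' hcard' q hinv1 hinv2
    refine ⟨y :: l', ?_, ?_, ?_⟩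
    · rw [← hcons]
      show y ::ₘ (l' : Multiset α) = y ::ₘ S'
      rw [hl'S]
    · apply List.isChain_cons.mpr
      refine ⟨fun b hb => ?_, hl'chain⟩
      have := hl'head b hb
      rw [hyq]
      exact fun h => this h.symm
    · intro a ha
      simp only [List.head?_cons, Option.mem_def, Option.some.injEq] at ha
      rw [← ha, hyq]
      exact hqc

lemma chain_count {α : Type*} (color : α → ℕ) (q : ℕ) :
    ∀ l : List α, List.Chain' (fun a b => color a ≠ color b) l →
      2 * (l.filter (fun x => decide (color x = q))).length ≤ l.length + 1
  | [] => by simp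
  | [a] => by
      intro _
      by_cases h : color a = q <;> simp [List.filter, h]
  | a :: b :: t => by
      intro h
      have hab : color a ≠ color b := (List.isChain_cons_cons.mp h).1
      have ht : List.Chain' (fun a b => color a ≠ color b) t :=
        (List.isChain_cons_cons.mp h).2.tail
      have := chain_count color q t ht
      have hlen : ((a :: b :: t).filter (fun x => decide (color x = q))).length
          = (t.filter (fun x => decide (color x = q))).length
            + ((if color a = q then 1 else 0) + (if color b = q then 1 else 0)) := by
        simp only [List.filter]
        by_cases ha : color a = q <;> by_cases hb : color b = q <;>
          simp [ha, hb, List.length_cons]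
      have hone : (if color a = q then 1 else 0) + (if color b = q then 1 else 0) ≤ 1 := by
        by_cases ha : color a = q <;> by_cases hb : color b = q <;> simp [ha, hb]
        exact hab (ha.trans hb.symm)
      simp only [List.length_cons] at *
      omega

lemma countColor_coe {α : Type*} (color : α → ℕ) (l : List α) (q : ℕ) :
    countColor color (l : Multiset α) q = (l.filter (fun x => decide (color x = q))).length := by
  simp [countColor, Multiset.filter_coe]

/-- For a critical color `q*` of `S`, the following are equivalent: (1) `S` admits a
color-alternating permutation; (2) `|S_{q*}| ≤ ⌈|S|/2⌉`; (3) the color discrepancy of `S`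
satisfies `δ ≤ 1`. -/
theorem stmt_3 {α : Type*} (Q : ℕ) (hQ : 2 ≤ Q) (color : α → ℕ)
    (hcolor : ∀ x, color x ∈ Finset.Icc 1 Q) (S : Multiset α)
    (qstar : ℕ) (hqstar : qstar ∈ Finset.Icc 1 Q)
    (hcrit : ∀ q ∈ Finset.Icc 1 Q, delta color S q ≤ delta color S qstar) :
    [HasAlternatingPerm color S,
     countColor color S qstar ≤ (Multiset.card S + 1) / 2,
     ∀ q ∈ Finset.Icc 1 Q, delta color S q ≤ 1].TFAE := by
  have hle : ∀ q, countColor color S q ≤ Multiset.card S := countColor_le_card color S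
  tfae_have 1 → 2 := by
    rintro ⟨l, hlS, hlchain⟩
    have h1 := chain_count color qstar l hlchain
    have h2 : countColor color S qstar
        = (l.filter (fun x => decide (color x = qstar))).length := by
      rw [← hlS, countColor_coe]
    have h3 : Multiset.card S = l.length := by rw [← hlS]; simp
    omega
  tfae_have 2 → 3 := by
    intro h2 q hq
    have hstar : delta color S qstar ≤ 1 := by
      have := hle qstar
      simp only [delta]
      have : 2 * countColor color S qstar ≤ Multiset.card S + 1 := by omega
      omega
    exact le_trans (hcrit q hq) hstar
  tfae_have 3 → 1 := by
    intro h3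
    have hall : ∀ q, q ≠ 0 → 2 * countColor color S q ≤ Multiset.card S + 1 := by
      intro q hq0
      rcases Nat.eq_zero_or_pos (countColor color S q) with h0 | hpos
      · omega
      · obtain ⟨y, hyS, hyq⟩ := countColor_pos color S hpos
        have hqIcc : q ∈ Finset.Icc 1 Q := hyq ▸ hcolor y
        have := h3 q hqIcc
        simp only [delta] at this
        have hle' := hle q
        omega
    have hzero : 2 * countColor color S 0 ≤ Multiset.card S := by
      have : countColor color S 0 = 0 := by
        rw [countColor, Multiset.card_eq_zero, Multiset.filter_eq_nil]
        intro a _ ha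
        have := hcolor a
        rw [Finset.mem_Icc] at this
        omega
      omega
    obtain ⟨l, hlS, hlchain, _⟩ := key_lemma color (Multiset.card S) S rfl 0 hall hzero
    exact ⟨l, hlS, hlchain⟩
  tfae_finish
end

section
/- Let (x, z) be a nonnegative real AF_ca-feasible solution for a CBPP instance, let j be a vertex with 1 ≤ j ≤ L−1, and let a, b ∈ {1,…,Q} be two distinct colors such that the color-alternation constraint at j holds with equality for color a and for color b, i.e. for c ∈ {a,b}, the total flow on arcs of color c entering j equals the total flow on arcs of colors in {1,…,Q+1}∖{c} leaving j. Then every arc (i,j,q) ∈ A with x_{ijq} > 0 satisfies q ∈ {a,b}. -/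
open scoped Classical

/-- An instance of the Colored Bin Packing Problem: bin capacity `L > 0`, `Q ≥ 2` colors,
items `Fin n` each with a length in `(0, L]`, a positive demand and a color in `{1, …, Q}`. -/
structure CBPP where
  L : ℕ
  Q : ℕ
  hL : 0 < L
  hQ : 2 ≤ Q
  n : ℕ
  len : Fin n → ℕ
  hlenPos : ∀ u, 0 < len u
  hlenLe : ∀ u, len u ≤ L
  dem : Fin n → ℕ
  hdemPos : ∀ u, 0 < dem u
  col : Fin n → ℕ
  hcol : ∀ u, col u ∈ Finset.Icc 1 Q

namespace CBPP

variable (P : CBPP)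

/-- Item arc `(i, j, q)` of the AF_ca graph: `0 ≤ i < j ≤ L`, color `q ∈ {1,…,Q}`, and there
is an item of length `j − i` and color `q`. -/
def IsItemArc (a : ℕ × ℕ × ℕ) : Prop :=
  a.1 < a.2.1 ∧ a.2.1 ≤ P.L ∧ a.2.2 ∈ Finset.Icc 1 P.Q ∧
    ∃ u : Fin P.n, P.len u = a.2.1 - a.1 ∧ P.col u = a.2.2

/-- Loss arc `(i, L, Q+1)` of the AF_ca graph, for `1 ≤ i ≤ L − 1`. -/
def IsLossArc (a : ℕ × ℕ × ℕ) : Prop :=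
  a.2.2 = P.Q + 1 ∧ a.2.1 = P.L ∧ 1 ≤ a.1 ∧ a.1 ≤ P.L - 1

def IsArc (a : ℕ × ℕ × ℕ) : Prop := P.IsItemArc a ∨ P.IsLossArc a

/-- The (finite) arc set `A` of the AF_ca graph. -/
noncomputable def arcs : Finset (ℕ × ℕ × ℕ) :=
  (Finset.range (P.L + 1) ×ˢ Finset.range (P.L + 1) ×ˢ Finset.range (P.Q + 2)).filter
    (fun a => P.IsArc a)

/-- Total flow on arcs entering vertex `j`. -/
noncomputable def inflow (x : ℕ × ℕ × ℕ → ℝ) (j : ℕ) : ℝ :=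
  ∑ a ∈ P.arcs.filter (fun a => a.2.1 = j), x a

/-- Total flow on arcs leaving vertex `j`. -/
noncomputable def outflow (x : ℕ × ℕ × ℕ → ℝ) (j : ℕ) : ℝ :=
  ∑ a ∈ P.arcs.filter (fun a => a.1 = j), x a

/-- Total flow on arcs of color `q` entering vertex `j`. -/
noncomputable def inflowC (x : ℕ × ℕ × ℕ → ℝ) (j q : ℕ) : ℝ :=
  ∑ a ∈ P.arcs.filter (fun a => a.2.1 = j ∧ a.2.2 = q), x a

/-- Total flow on arcs of colors in `{1,…,Q+1} \ {q}` leaving vertex `j`. -/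
noncomputable def outflowNotC (x : ℕ × ℕ × ℕ → ℝ) (j q : ℕ) : ℝ :=
  ∑ a ∈ P.arcs.filter (fun a => a.1 = j ∧ a.2.2 ≠ q), x a

/-- AF_ca-feasibility of a nonnegative real solution `(x, z)`. -/
structure AFcaFeasible (x : ℕ × ℕ × ℕ → ℝ) (z : ℝ) : Prop where
  nonneg : ∀ a ∈ P.arcs, 0 ≤ x a
  znonneg : 0 ≤ z
  flow_source : P.inflow x 0 - P.outflow x 0 = -z
  flow_mid : ∀ j, 1 ≤ j → j ≤ P.L - 1 → P.inflow x j - P.outflow x j = 0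
  flow_sink : P.inflow x P.L - P.outflow x P.L = z
  color_alt : ∀ j, 1 ≤ j → j ≤ P.L - 1 → ∀ q ∈ Finset.Icc 1 P.Q,
    P.inflowC x j q ≤ P.outflowNotC x j q
  demand : ∀ u : Fin P.n,
    (∑ a ∈ P.arcs.filter (fun a => a.2.1 = a.1 + P.len u ∧ a.2.2 = P.col u), x a) = P.dem u

end CBPP

/-- If an AF_ca-feasible solution satisfies the color-alternation constraint at a vertex
`j ∈ {1,…,L−1}` with equality for two distinct colors `a` and `b`, then every arc entering
`j` with positive flow has color `a` or `b`. -/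
theorem stmt_5 (P : CBPP) (x : ℕ × ℕ × ℕ → ℝ) (z : ℝ) (hfeas : P.AFcaFeasible x z)
    (j : ℕ) (hj1 : 1 ≤ j) (hjL : j ≤ P.L - 1)
    (a b : ℕ) (ha : a ∈ Finset.Icc 1 P.Q) (hb : b ∈ Finset.Icc 1 P.Q) (hab : a ≠ b)
    (heqa : P.inflowC x j a = P.outflowNotC x j a)
    (heqb : P.inflowC x j b = P.outflowNotC x j b) :
    ∀ i q : ℕ, (i, j, q) ∈ P.arcs → 0 < x (i, j, q) → q = a ∨ q = b := by
  intro i q hmem hpos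
  by_contra hq
  push_neg at hq
  obtain ⟨hqa, hqb⟩ := hq
  set Sin := P.arcs.filter (fun e => e.2.1 = j ∧ e.2.2 ≠ a ∧ e.2.2 ≠ b) with hSin
  set Sout := P.arcs.filter (fun e => e.1 = j ∧ e.2.2 ≠ a ∧ e.2.2 ≠ b) with hSout
  have hin : P.inflowC x j a + P.inflowC x j b + ∑ e ∈ Sin, x e = P.inflow x j := by
    unfold CBPP.inflowC CBPP.inflow
    rw [hSin, Finset.sum_filter, Finset.sum_filter, Finset.sum_filter, Finset.sum_filter,
      ← Finset.sum_add_distrib, ← Finset.sum_add_distrib]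
    apply Finset.sum_congr rfl
    intro e _
    by_cases h1 : e.2.1 = j
    · by_cases h2 : e.2.2 = a
      · have : e.2.2 ≠ b := h2 ▸ hab
        simp [h1, h2, this, hab, Ne.symm hab]
      · by_cases h3 : e.2.2 = b <;> simp [h1, h2, h3, hab, Ne.symm hab]
    · simp [h1]
  have hout : P.outflowNotC x j a + P.outflowNotC x j b
      = P.outflow x j + ∑ e ∈ Sout, x e := by
    unfold CBPP.outflowNotC CBPP.outflow
    rw [hSout, Finset.sum_filter, Finset.sum_filter, Finset.sum_filter, Finset.sum_filter,
      ← Finset.sum_add_distrib, ← Finset.sum_add_distrib]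
    apply Finset.sum_congr rfl
    intro e _
    by_cases h1 : e.1 = j
    · by_cases h2 : e.2.2 = a
      · have : e.2.2 ≠ b := h2 ▸ hab
        simp [h1, h2, this, hab, Ne.symm hab]
      · by_cases h3 : e.2.2 = b <;> simp [h1, h2, h3, hab, Ne.symm hab]
    · simp [h1]
  have hmid := hfeas.flow_mid j hj1 hjL
  have hinpos : 0 ≤ ∑ e ∈ Sin, x e :=
    Finset.sum_nonneg fun e he => hfeas.nonneg e (Finset.mem_filter.mp he).1
  have houtpos : 0 ≤ ∑ e ∈ Sout, x e :=
    Finset.sum_nonneg fun e he => hfeas.nonneg e (Finset.mem_filter.mp he).1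
  have hSin0 : ∑ e ∈ Sin, x e = 0 := by linarith
  have hmemS : (i, j, q) ∈ Sin := Finset.mem_filter.mpr ⟨hmem, rfl, hqa, hqb⟩
  have := (Finset.sum_eq_zero_iff_of_nonneg
    (fun e he => hfeas.nonneg e (Finset.mem_filter.mp he).1)).mp hSin0 _ hmemS
  linarith
end

section
/- Let (x, z) be a nonnegative real AF_ca-feasible solution for a CBPP instance and let j be a vertex with 1 ≤ j ≤ L−1. Then the number of colors q ∈ {1,…,Q} such that the color-alternation constraint at j holds with equality for q and the total flow on arcs of color q entering j is positive, is at most 2. -/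
open scoped Classical

/-- For any AF_ca-feasible solution and any vertex `j ∈ {1,…,L−1}`, at most two colors
satisfy the color-alternation constraint at `j` with equality and have positive inflow of
that color at `j`. -/
theorem stmt_6 (P : CBPP) (x : ℕ × ℕ × ℕ → ℝ) (z : ℝ) (hfeas : P.AFcaFeasible x z)
    (j : ℕ) (hj1 : 1 ≤ j) (hjL : j ≤ P.L - 1) :
    ((Finset.Icc 1 P.Q).filter (fun q =>
      P.inflowC x j q = P.outflowNotC x j q ∧ 0 < P.inflowC x j q)).card ≤ 2 := by
  classical
  set F := ((Finset.Icc 1 P.Q).filter (fun q =>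
      P.inflowC x j q = P.outflowNotC x j q ∧ 0 < P.inflowC x j q)) with hF
  by_contra hcard
  push_neg at hcard
  -- notation
  set T := P.arcs.filter (fun a => a.2.1 = j) with hT
  set U := P.arcs.filter (fun a => a.1 = j) with hU
  have hnonnegT : ∀ a ∈ T, 0 ≤ x a := fun a ha => hfeas.nonneg a (Finset.mem_filter.mp ha).1
  have hnonnegU : ∀ a ∈ U, 0 ≤ x a := fun a ha => hfeas.nonneg a (Finset.mem_filter.mp ha).1
  set S := P.outflow x j with hS
  have hIn : P.inflow x j = S := by
    have := hfeas.flow_mid j hj1 hjL; linarith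
  have hSnn : 0 ≤ S := Finset.sum_nonneg hnonnegU
  -- inflowC as a sum over T
  have hinC : ∀ q, P.inflowC x j q = ∑ a ∈ T.filter (fun a => a.2.2 = q), x a := by
    intro q
    unfold CBPP.inflowC
    rw [hT, Finset.filter_filter]
  -- split of outflow
  set o : ℕ → ℝ := fun q => ∑ a ∈ U.filter (fun a => a.2.2 = q), x a with ho
  have honn : ∀ q, 0 ≤ o q := fun q =>
    Finset.sum_nonneg (fun a ha => hnonnegU a (Finset.mem_filter.mp ha).1)
  have hsplit : ∀ q, o q + P.outflowNotC x j q = S := by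
    intro q
    unfold CBPP.outflowNotC
    rw [hS]
    unfold CBPP.outflow
    rw [show P.arcs.filter (fun a => a.1 = j ∧ a.2.2 ≠ q)
        = U.filter (fun a => ¬ a.2.2 = q) by rw [hU, Finset.filter_filter]]
    exact Finset.sum_filter_add_sum_filter_not U (fun a => a.2.2 = q) x
  -- sum of inflowC over F is at most inflow
  have hsumIn : ∑ q ∈ F, P.inflowC x j q ≤ S := by
    rw [← hIn]
    calc ∑ q ∈ F, P.inflowC x j q
        = ∑ a ∈ T.filter (fun a => a.2.2 ∈ F), x a := by
          simp only [hinC]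
          exact Finset.sum_fiberwise_eq_sum_filter T F (fun a => a.2.2) x
      _ ≤ ∑ a ∈ T, x a :=
          Finset.sum_le_sum_of_subset_of_nonneg (Finset.filter_subset _ _)
            (fun a ha _ => hnonnegT a ha)
      _ = P.inflow x j := rfl
  -- sum of o over F is at most outflow
  have hsumO : ∑ q ∈ F, o q ≤ S := by
    calc ∑ q ∈ F, o q
        = ∑ a ∈ U.filter (fun a => a.2.2 ∈ F), x a :=
          Finset.sum_fiberwise_eq_sum_filter U F (fun a => a.2.2) x
      _ ≤ ∑ a ∈ U, x a :=
          Finset.sum_le_sum_of_subset_of_nonneg (Finset.filter_subset _ _)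
            (fun a ha _ => hnonnegU a ha)
      _ = S := rfl
  -- for q ∈ F, inflowC + o q = S
  have htight : ∀ q ∈ F, P.inflowC x j q + o q = S := by
    intro q hq
    rw [hF] at hq
    obtain ⟨_, heq, _⟩ := Finset.mem_filter.mp hq
    rw [heq]
    linarith [hsplit q]
  -- summing
  have hsum : (F.card : ℝ) * S = ∑ q ∈ F, P.inflowC x j q + ∑ q ∈ F, o q := by
    rw [← Finset.sum_add_distrib, Finset.sum_congr rfl htight, Finset.sum_const,
      nsmul_eq_mul]
  have h3 : (3 : ℝ) ≤ (F.card : ℝ) := by exact_mod_cast hcard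
  have hS0 : S = 0 := by nlinarith
  -- but F is nonempty, giving a positive inflowC bounded by S = 0
  obtain ⟨q, hq⟩ : F.Nonempty := Finset.card_pos.mp (by omega)
  have hqpos : 0 < P.inflowC x j q := by
    rw [hF] at hq
    exact (Finset.mem_filter.mp hq).2.2
  have hle : P.inflowC x j q ≤ ∑ q ∈ F, P.inflowC x j q := by
    refine Finset.single_le_sum (fun r _ => ?_) hq
    rw [hinC]
    exact Finset.sum_nonneg (fun a ha => hnonnegT a (Finset.mem_filter.mp ha).1)
  rw [hS0] at hsumIn
  linarith
end

section
/- Let (x, z) be a nonnegative real AF_ca-feasible solution for a CBPP instance, let j be a vertex with 1 ≤ j ≤ L−1, and let (i,j,a) ∈ A be an arc with x_{ija} > 0. Then there exists an arc (j,k,b) ∈ A with x_{jkb} > 0 that is not blocked for (i,j,a). -/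
open scoped Classical

namespace CBPP

/-- Arc `(j, k, b)` is blocked for an arc `(i, j, a)`: `b = a`, or some color
`q ∈ {1,…,Q} \ {a, b}` satisfies the color-alternation constraint at `j` with equality. -/
def Blocked (P : CBPP) (x : ℕ × ℕ × ℕ → ℝ) (j a b : ℕ) : Prop :=
  b = a ∨ ∃ q ∈ Finset.Icc 1 P.Q, q ≠ a ∧ q ≠ b ∧ P.inflowC x j q = P.outflowNotC x j q

end CBPP

namespace CBPP

variable (P : CBPP)

/-- Total flow on arcs of colors `≠ q` entering vertex `j`. -/
noncomputable def inflowN (x : ℕ × ℕ × ℕ → ℝ) (j q : ℕ) : ℝ :=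
  ∑ a ∈ P.arcs.filter (fun a => a.2.1 = j ∧ a.2.2 ≠ q), x a

/-- Total flow on arcs of color `q` leaving vertex `j`. -/
noncomputable def outflowC (x : ℕ × ℕ × ℕ → ℝ) (j q : ℕ) : ℝ :=
  ∑ a ∈ P.arcs.filter (fun a => a.1 = j ∧ a.2.2 = q), x a

lemma inflowC_add_inflowN (x : ℕ × ℕ × ℕ → ℝ) (j q : ℕ) :
    P.inflowC x j q + P.inflowN x j q = P.inflow x j := by
  classical
  rw [inflowC, inflowN, inflow,
    ← Finset.sum_filter_add_sum_filter_not (P.arcs.filter (fun a => a.2.1 = j))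
      (fun a => a.2.2 = q) x]
  congr 1 <;> rw [Finset.filter_filter]

lemma outflowC_add_outflowNotC (x : ℕ × ℕ × ℕ → ℝ) (j q : ℕ) :
    P.outflowC x j q + P.outflowNotC x j q = P.outflow x j := by
  classical
  rw [outflowC, outflowNotC, outflow,
    ← Finset.sum_filter_add_sum_filter_not (P.arcs.filter (fun a => a.1 = j))
      (fun a => a.2.2 = q) x]
  congr 1 <;> rw [Finset.filter_filter]

end CBPP

section Aux

lemma aux_exists_pos_of_sum_pos {s : Finset (ℕ × ℕ × ℕ)} {f : ℕ × ℕ × ℕ → ℝ}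
    (h : 0 < ∑ p ∈ s, f p) : ∃ p ∈ s, 0 < f p := by
  by_contra h'
  push_neg at h'
  have : ∑ p ∈ s, f p ≤ 0 := Finset.sum_nonpos h'
  linarith

lemma aux_sum_one_le {s : Finset (ℕ × ℕ × ℕ)} {f : ℕ × ℕ × ℕ → ℝ}
    (h0 : ∀ p ∈ s, 0 ≤ f p) (pr : ℕ × ℕ × ℕ → Prop) [DecidablePred pr]
    {q1 r : ℕ} (h1 : q1 ≠ r) :
    (∑ p ∈ s.filter (fun p => pr p ∧ p.2.2 = q1), f p) ≤
      ∑ p ∈ s.filter (fun p => pr p ∧ p.2.2 ≠ r), f p := by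
  classical
  apply Finset.sum_le_sum_of_subset_of_nonneg
  · intro p hp
    simp only [Finset.mem_filter] at *
    refine ⟨hp.1, hp.2.1, ?_⟩
    rw [hp.2.2]; exact h1
  · intro p hp _
    exact h0 p (Finset.mem_filter.mp hp).1

lemma aux_sum_pair_le {s : Finset (ℕ × ℕ × ℕ)} {f : ℕ × ℕ × ℕ → ℝ}
    (h0 : ∀ p ∈ s, 0 ≤ f p) (pr : ℕ × ℕ × ℕ → Prop) [DecidablePred pr]
    {q1 q2 r : ℕ} (h12 : q1 ≠ q2) (h1 : q1 ≠ r) (h2 : q2 ≠ r) :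
    (∑ p ∈ s.filter (fun p => pr p ∧ p.2.2 = q1), f p) +
      (∑ p ∈ s.filter (fun p => pr p ∧ p.2.2 = q2), f p) ≤
      ∑ p ∈ s.filter (fun p => pr p ∧ p.2.2 ≠ r), f p := by
  classical
  rw [← Finset.sum_union ?hd]
  case hd =>
    rw [Finset.disjoint_left]
    intro p hp hp'
    simp only [Finset.mem_filter] at hp hp'
    exact h12 (hp.2.2 ▸ hp'.2.2 ▸ rfl)
  apply Finset.sum_le_sum_of_subset_of_nonneg
  · intro p hp
    simp only [Finset.mem_union, Finset.mem_filter] at *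
    rcases hp with hp | hp
    · exact ⟨hp.1, hp.2.1, by rw [hp.2.2]; exact h1⟩
    · exact ⟨hp.1, hp.2.1, by rw [hp.2.2]; exact h2⟩
  · intro p hp _
    exact h0 p (Finset.mem_filter.mp hp).1

end Aux

/-- For any AF_ca-feasible solution, vertex `j ∈ {1,…,L−1}` and arc `(i, j, a)` with
positive flow, there is an arc `(j, k, b)` with positive flow that is not blocked for
`(i, j, a)`. -/
theorem stmt_7 (P : CBPP) (x : ℕ × ℕ × ℕ → ℝ) (z : ℝ) (hfeas : P.AFcaFeasible x z)
    (j : ℕ) (hj1 : 1 ≤ j) (hjL : j ≤ P.L - 1)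
    (i a : ℕ) (harc : (i, j, a) ∈ P.arcs) (hpos : 0 < x (i, j, a)) :
    ∃ k b : ℕ, (j, k, b) ∈ P.arcs ∧ 0 < x (j, k, b) ∧ ¬ P.Blocked x j a b := by
  classical
  have hnn := hfeas.nonneg
  have hjlt : j < P.L := by omega
  -- the color a is a real color
  have haQ : a ∈ Finset.Icc 1 P.Q := by
    rcases (Finset.mem_filter.mp harc).2 with h | h
    · exact h.2.2.1
    · exact absurd h.2.1 (by simp; omega)
  -- positive inflow of color a
  have hinA : 0 < P.inflowC x j a := by
    refine lt_of_lt_of_le hpos ?_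
    apply Finset.single_le_sum (f := x)
    · intro p hp; exact hnn p (Finset.mem_filter.mp hp).1
    · exact Finset.mem_filter.mpr ⟨harc, rfl, rfl⟩
  have hbal : P.inflow x j = P.outflow x j := by
    have := hfeas.flow_mid j hj1 hjL; linarith
  -- the set of "tight" colors different from a
  set T : Finset ℕ := (Finset.Icc 1 P.Q).filter
    (fun q => q ≠ a ∧ P.inflowC x j q = P.outflowNotC x j q) with hT
  -- tight colors determine the outflow of that color
  have houtC : ∀ q ∈ T, P.outflowC x j q = P.inflow x j - P.inflowC x j q := by
    intro q hq
    have h1 := P.outflowC_add_outflowNotC x j q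
    have h2 := (Finset.mem_filter.mp hq).2.2
    linarith
  -- T has at most one element
  have huniq : ∀ q1 ∈ T, ∀ q2 ∈ T, q1 = q2 := by
    intro q1 hq1 q2 hq2
    by_contra hne
    obtain ⟨hq1I, hq1a, -⟩ := Finset.mem_filter.mp hq1
    obtain ⟨hq2I, hq2a, -⟩ := Finset.mem_filter.mp hq2
    have e1 := houtC q1 hq1
    have e2 := houtC q2 hq2
    have hout2 : P.outflowC x j q1 + P.outflowC x j q2 ≤ P.outflowNotC x j a :=
      aux_sum_pair_le (fun p hp => hnn p hp) (fun p => p.1 = j) hne hq1a hq2a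
    have hin2 : P.inflowC x j q1 + P.inflowC x j q2 ≤ P.inflowN x j a :=
      aux_sum_pair_le (fun p hp => hnn p hp) (fun p => p.2.1 = j) hne hq1a hq2a
    have hinsplit := P.inflowC_add_inflowN x j a
    have houtsplit := P.outflowC_add_outflowNotC x j a
    have houtCa : 0 ≤ P.outflowC x j a :=
      Finset.sum_nonneg (fun p hp => hnn p (Finset.mem_filter.mp hp).1)
    linarith
  by_cases hTe : T = ∅
  · -- no tight color: any positive outgoing arc of color ≠ a works
    have halt := hfeas.color_alt j hj1 hjL a haQ
    have : 0 < P.outflowNotC x j a := lt_of_lt_of_le hinA halt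
    obtain ⟨p, hp, hppos⟩ := aux_exists_pos_of_sum_pos this
    obtain ⟨hpA, hpj, hpb⟩ := Finset.mem_filter.mp hp
    obtain ⟨p1, p2, p3⟩ := p
    simp only at hpj hpb
    subst hpj
    refine ⟨p2, p3, hpA, hppos, ?_⟩
    rintro (rfl | ⟨q, hqI, hqa, hqb, hqt⟩)
    · exact hpb rfl
    · have hqT : q ∈ T := by rw [hT]; exact Finset.mem_filter.mpr ⟨hqI, hqa, hqt⟩
      rw [hTe] at hqT
      exact absurd hqT (Finset.notMem_empty q)
  · -- a unique tight color q0: any positive outgoing arc of color q0 works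
    obtain ⟨q0, hq0⟩ := Finset.nonempty_iff_ne_empty.mpr hTe
    obtain ⟨hq0I, hq0a, hq0t⟩ := Finset.mem_filter.mp hq0
    -- the outflow of color q0 is positive
    have hle : P.inflowC x j a ≤ P.inflowN x j q0 :=
      aux_sum_one_le (fun p hp => hnn p hp) (fun p => p.2.1 = j) (Ne.symm hq0a)
    have hinsplit := P.inflowC_add_inflowN x j q0
    have e0 := houtC q0 hq0
    have : 0 < P.outflowC x j q0 := by linarith
    obtain ⟨p, hp, hppos⟩ := aux_exists_pos_of_sum_pos this
    obtain ⟨hpA, hpj, hpb⟩ := Finset.mem_filter.mp hp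
    obtain ⟨p1, p2, p3⟩ := p
    simp only at hpj hpb
    subst hpj
    rw [hpb] at hpA hppos
    refine ⟨p2, q0, hpA, hppos, ?_⟩
    rintro (rfl | ⟨q, hqI, hqa, hqb, hqt⟩)
    · exact hq0a rfl
    · have hqT : q ∈ T := by rw [hT]; exact Finset.mem_filter.mpr ⟨hqI, hqa, hqt⟩
      exact hqb (huniq q hqT q0 hq0)
end

section
/- For every CBPP instance and every nonnegative real AF_ml-feasible solution (x̄, z̄), there exists a nonnegative real AF_ca-feasible solution (x̄′, z̄) with the same objective value z̄. In particular, x̄′ may be taken as: for each item arc (i,j,q) of the AF_ca graph with q ≤ Q, x̄′_{ijq} is the sum of x̄ over all AF_ml arcs ((i,q′),(j,q)) with q′ ≠ q (including the source arcs from (0,0)), and for each loss arc (i,L,Q+1), x̄′ is the sum of x̄ over all AF_ml loss arcs ((i,q′),(L,q′)), q′ ∈ {1,…,Q}. -/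
open scoped Classical

namespace CBPP

variable (P : CBPP)

/-- Source arc `((0,0),(j,q))` of the AF_ml graph: some item has length `j` and color `q`. -/
def IsMlSourceArc (a : (ℕ × ℕ) × ℕ × ℕ) : Prop :=
  a.1 = (0, 0) ∧ ∃ u : Fin P.n, P.len u = a.2.1 ∧ P.col u = a.2.2

/-- Item arc `((i,q'),(j,q))` of the AF_ml graph: `1 ≤ i < j ≤ L`, `q' ∈ {1,…,Q}`, `q ≠ q'`,
and some item has length `j − i` and color `q`. -/
def IsMlItemArc (a : (ℕ × ℕ) × ℕ × ℕ) : Prop :=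
  1 ≤ a.1.1 ∧ a.1.1 < a.2.1 ∧ a.2.1 ≤ P.L ∧ a.1.2 ∈ Finset.Icc 1 P.Q ∧ a.2.2 ≠ a.1.2 ∧
    ∃ u : Fin P.n, P.len u = a.2.1 - a.1.1 ∧ P.col u = a.2.2

/-- Loss arc `((i,q),(L,q))` of the AF_ml graph, for `1 ≤ i ≤ L − 1` and `q ∈ {1,…,Q}`. -/
def IsMlLossArc (a : (ℕ × ℕ) × ℕ × ℕ) : Prop :=
  1 ≤ a.1.1 ∧ a.1.1 ≤ P.L - 1 ∧ a.2.1 = P.L ∧ a.2.2 = a.1.2 ∧ a.1.2 ∈ Finset.Icc 1 P.Q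

def IsMlArc (a : (ℕ × ℕ) × ℕ × ℕ) : Prop :=
  P.IsMlSourceArc a ∨ P.IsMlItemArc a ∨ P.IsMlLossArc a

/-- The (finite) arc set of the AF_ml graph. -/
noncomputable def mlArcs : Finset ((ℕ × ℕ) × ℕ × ℕ) :=
  ((Finset.range (P.L + 1) ×ˢ Finset.range (P.Q + 1)) ×ˢ
    (Finset.range (P.L + 1) ×ˢ Finset.range (P.Q + 1))).filter (fun a => P.IsMlArc a)

/-- Total flow on AF_ml arcs entering vertex `v`. -/
noncomputable def mlIn (x : (ℕ × ℕ) × ℕ × ℕ → ℝ) (v : ℕ × ℕ) : ℝ :=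
  ∑ a ∈ P.mlArcs.filter (fun a => a.2 = v), x a

/-- Total flow on AF_ml arcs leaving vertex `v`. -/
noncomputable def mlOut (x : (ℕ × ℕ) × ℕ × ℕ → ℝ) (v : ℕ × ℕ) : ℝ :=
  ∑ a ∈ P.mlArcs.filter (fun a => a.1 = v), x a

/-- AF_ml-feasibility of a nonnegative real solution `(x, z)`. -/
structure AFmlFeasible (x : (ℕ × ℕ) × ℕ × ℕ → ℝ) (z : ℝ) : Prop where
  nonneg : ∀ a ∈ P.mlArcs, 0 ≤ x a
  znonneg : 0 ≤ z
  flow_source : P.mlOut x (0, 0) = z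
  flow_mid : ∀ j q, 1 ≤ j → j ≤ P.L - 1 → q ∈ Finset.Icc 1 P.Q →
    P.mlIn x (j, q) = P.mlOut x (j, q)
  flow_sink : (∑ a ∈ P.mlArcs.filter (fun a => a.2.1 = P.L), x a) = z
  demand : ∀ u : Fin P.n,
    (∑ a ∈ P.mlArcs.filter (fun a =>
      a.2.1 = a.1.1 + P.len u ∧ a.2.2 = P.col u ∧ a.1.2 ≠ P.col u), x a) = P.dem u

end CBPP


namespace CBPP

variable {P : CBPP}

/-- Projection from AF_ml arcs to AF_ca arcs. -/
def phi (P : CBPP) (b : (ℕ × ℕ) × ℕ × ℕ) : ℕ × ℕ × ℕ :=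
  if b.2.2 = b.1.2 then (b.1.1, P.L, P.Q + 1) else (b.1.1, b.2.1, b.2.2)

lemma phi_fst (P : CBPP) (b : (ℕ × ℕ) × ℕ × ℕ) : (P.phi b).1 = b.1.1 := by
  unfold phi; split <;> rfl

lemma mem_mlArcs_isMlArc {b} (hb : b ∈ P.mlArcs) : P.IsMlArc b :=
  (Finset.mem_filter.mp hb).2

lemma ml_facts {b} (hb : b ∈ P.mlArcs) :
    b.2.1 ≤ P.L ∧ (1 ≤ b.1.1 → b.1.2 ∈ Finset.Icc 1 P.Q) ∧
    ((b.2.2 = b.1.2 ∧ P.IsMlLossArc b) ∨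
     (b.2.2 ≠ b.1.2 ∧ b.1.1 < b.2.1 ∧ b.2.2 ∈ Finset.Icc 1 P.Q ∧
       (b.1.1 = 0 → b.1 = (0, 0)) ∧
       ∃ u, P.len u = b.2.1 - b.1.1 ∧ P.col u = b.2.2)) := by
  rcases mem_mlArcs_isMlArc hb with hs | hi | hl
  · obtain ⟨h1, u, hu1, hu2⟩ := hs
    have hc := P.hcol u
    have h10 : b.1.1 = 0 := by rw [h1]
    have h12 : b.1.2 = 0 := by rw [h1]
    have hcQ : 1 ≤ P.col u ∧ P.col u ≤ P.Q := Finset.mem_Icc.mp hc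
    refine ⟨hu1 ▸ P.hlenLe u, by omega,
      Or.inr ⟨by omega, by have := P.hlenPos u; omega, hu2 ▸ hc, fun _ => h1,
        u, by omega, hu2⟩⟩
  · obtain ⟨h1, h2, h3, h4, h5, u, hu1, hu2⟩ := hi
    refine ⟨h3, fun _ => h4, Or.inr ⟨h5, h2, hu2 ▸ P.hcol u, by omega, u, hu1, hu2⟩⟩
  · obtain ⟨h1, h2, h3, h4, h5⟩ := hl
    exact ⟨h3 ▸ le_refl P.L, fun _ => h5, Or.inl ⟨h4, h1, h2, h3, h4, h5⟩⟩

lemma phi_mem {b} (hb : b ∈ P.mlArcs) : P.phi b ∈ P.arcs := by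
  obtain ⟨hL1, hcol1, hcase⟩ := ml_facts hb
  have hL := P.hL
  unfold phi arcs
  rcases hcase with ⟨heq, l1, l2, l3, l4, l5⟩ | ⟨hne, hlt, hc, hsrc, u, hu1, hu2⟩
  · rw [if_pos heq]
    refine Finset.mem_filter.mpr ⟨?_, Or.inr ⟨rfl, rfl, l1, l2⟩⟩
    simp only [Finset.mem_product, Finset.mem_range]
    omega
  · rw [if_neg hne]
    have hcQ := Finset.mem_Icc.mp hc
    refine Finset.mem_filter.mpr ⟨?_, Or.inl ⟨hlt, hL1, hc, u, hu1, hu2⟩⟩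
    simp only [Finset.mem_product, Finset.mem_range]
    omega

lemma regroup (x : (ℕ × ℕ) × ℕ × ℕ → ℝ) (p : ℕ × ℕ × ℕ → Prop) [DecidablePred p] :
    ∑ a ∈ P.arcs.filter p, ∑ b ∈ P.mlArcs.filter (fun b => P.phi b = a), x b
      = ∑ b ∈ P.mlArcs.filter (fun b => p (P.phi b)), x b := by
  rw [← Finset.sum_fiberwise_of_maps_to (g := P.phi)
      (fun b hb => Finset.mem_filter.mpr
        ⟨phi_mem (Finset.mem_filter.mp hb).1, (Finset.mem_filter.mp hb).2⟩) x]
  refine Finset.sum_congr rfl fun a ha => ?_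
  have hpa := (Finset.mem_filter.mp ha).2
  rw [Finset.filter_filter]
  refine Finset.sum_congr (Finset.filter_congr fun b _ => ?_) fun _ _ => rfl
  exact ⟨fun h => ⟨by rw [h]; exact hpa, h⟩, And.right⟩

lemma arcs_loss {a} (ha : a ∈ P.arcs) (h : a.2.2 = P.Q + 1) : a.2.1 = P.L := by
  rcases (Finset.mem_filter.mp ha).2 with hi | hl
  · have := Finset.mem_Icc.mp hi.2.2.1; omega
  · exact hl.2.1

lemma arcs_item {a} (ha : a ∈ P.arcs) (h : a.2.2 ≠ P.Q + 1) : P.IsItemArc a := by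
  rcases (Finset.mem_filter.mp ha).2 with hi | hl
  · exact hi
  · exact absurd hl.1 h

lemma key (x : (ℕ × ℕ) × ℕ × ℕ → ℝ) {a} (ha : a ∈ P.arcs) :
    (if a.2.2 = P.Q + 1 then
        ∑ b ∈ P.mlArcs.filter (fun b => b.1.1 = a.1 ∧ b.2.1 = P.L ∧ b.2.2 = b.1.2), x b
      else
        ∑ b ∈ P.mlArcs.filter
          (fun b => b.1.1 = a.1 ∧ b.2.1 = a.2.1 ∧ b.2.2 = a.2.2 ∧ b.1.2 ≠ a.2.2), x b)
    = ∑ b ∈ P.mlArcs.filter (fun b => P.phi b = a), x b := by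
  split_ifs with h
  · have hL := arcs_loss ha h
    refine Finset.sum_congr (Finset.filter_congr fun b hb => ?_) fun _ _ => rfl
    obtain ⟨_, _, hcase⟩ := ml_facts hb
    unfold phi
    constructor
    · rintro ⟨h1, h2, h3⟩
      rw [if_pos h3]
      exact Prod.ext h1 (Prod.ext hL.symm h.symm)
    · intro hpa
      by_cases h3 : b.2.2 = b.1.2
      · rw [if_pos h3] at hpa
        have h1 : b.1.1 = a.1 := congrArg Prod.fst hpa
        have hl : P.IsMlLossArc b := (hcase.resolve_right fun hc => hc.1 h3).2
        exact ⟨h1, hl.2.2.1, h3⟩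
      · rw [if_neg h3] at hpa
        exfalso
        obtain ⟨_, _, hc, _, _⟩ := hcase.resolve_left fun hc => h3 hc.1
        have h22 : b.2.2 = a.2.2 := congrArg (fun t => t.2.2) hpa
        have := Finset.mem_Icc.mp hc
        omega
  · have hitem := arcs_item ha h
    refine Finset.sum_congr (Finset.filter_congr fun b hb => ?_) fun _ _ => rfl
    obtain ⟨_, _, hcase⟩ := ml_facts hb
    unfold phi
    constructor
    · rintro ⟨h1, h2, h3, h4⟩
      have hne : b.2.2 ≠ b.1.2 := by rw [h3]; exact fun hc => h4 hc.symm
      rw [if_neg hne]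
      exact Prod.ext h1 (Prod.ext h2 h3)
    · intro hpa
      by_cases h3 : b.2.2 = b.1.2
      · rw [if_pos h3] at hpa
        exact absurd (congrArg (fun t => t.2.2) hpa).symm h
      · rw [if_neg h3] at hpa
        have h1 : b.1.1 = a.1 := congrArg Prod.fst hpa
        have h2 : b.2.1 = a.2.1 := congrArg (fun t => t.2.1) hpa
        have h4 : b.2.2 = a.2.2 := congrArg (fun t => t.2.2) hpa
        exact ⟨h1, h2, h4, fun hc => h3 (h4.trans hc.symm)⟩

lemma sum_y (x : (ℕ × ℕ) × ℕ × ℕ → ℝ) (p : ℕ × ℕ × ℕ → Prop) [DecidablePred p] :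
    (∑ a ∈ P.arcs.filter p,
      if a.2.2 = P.Q + 1 then
        ∑ b ∈ P.mlArcs.filter (fun b => b.1.1 = a.1 ∧ b.2.1 = P.L ∧ b.2.2 = b.1.2), x b
      else
        ∑ b ∈ P.mlArcs.filter
          (fun b => b.1.1 = a.1 ∧ b.2.1 = a.2.1 ∧ b.2.2 = a.2.2 ∧ b.1.2 ≠ a.2.2), x b)
      = ∑ b ∈ P.mlArcs.filter (fun b => p (P.phi b)), x b := by
  rw [← regroup]
  exact Finset.sum_congr rfl fun a ha => key x (Finset.mem_filter.mp ha).1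

end CBPP

/-- From any nonnegative real AF_ml-feasible solution `(x̄, z̄)` one obtains an AF_ca-feasible
solution `(x̄′, z̄)` with the same objective value, where `x̄′` on an item arc `(i,j,q)`
(`q ≤ Q`) is the sum of `x̄` over AF_ml arcs `((i,q′),(j,q))` with `q′ ≠ q` (including source
arcs), and on a loss arc `(i,L,Q+1)` is the sum of `x̄` over AF_ml loss arcs `((i,q′),(L,q′))`. -/
theorem stmt_11 (P : CBPP) (x : (ℕ × ℕ) × ℕ × ℕ → ℝ) (z : ℝ)
    (hfeas : P.AFmlFeasible x z) :
    P.AFcaFeasible (fun a =>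
      if a.2.2 = P.Q + 1 then
        ∑ b ∈ P.mlArcs.filter (fun b => b.1.1 = a.1 ∧ b.2.1 = P.L ∧ b.2.2 = b.1.2), x b
      else
        ∑ b ∈ P.mlArcs.filter
          (fun b => b.1.1 = a.1 ∧ b.2.1 = a.2.1 ∧ b.2.2 = a.2.2 ∧ b.1.2 ≠ a.2.2), x b) z := by
  classical
  have hL := P.hL
  set y : ℕ × ℕ × ℕ → ℝ := fun a =>
      if a.2.2 = P.Q + 1 then
        ∑ b ∈ P.mlArcs.filter (fun b => b.1.1 = a.1 ∧ b.2.1 = P.L ∧ b.2.2 = b.1.2), x b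
      else
        ∑ b ∈ P.mlArcs.filter
          (fun b => b.1.1 = a.1 ∧ b.2.1 = a.2.1 ∧ b.2.2 = a.2.2 ∧ b.1.2 ≠ a.2.2), x b
    with hy
  constructor
  · -- nonneg
    intro a _
    rw [hy]
    dsimp only
    split_ifs <;>
      exact Finset.sum_nonneg fun b hb => hfeas.nonneg b (Finset.mem_filter.mp hb).1
  · exact hfeas.znonneg
  · -- flow_source
    have hin : P.inflow y 0 = 0 := by
      unfold CBPP.inflow
      rw [Finset.filter_false_of_mem, Finset.sum_empty]
      intro a ha h2
      rcases (Finset.mem_filter.mp ha).2 with hi | hl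
      · obtain ⟨hlt, _⟩ := hi; omega
      · obtain ⟨_, h, _⟩ := hl; omega
    have hout : P.outflow y 0 = z := by
      unfold CBPP.outflow
      rw [hy]
      beta_reduce
      rw [CBPP.sum_y]
      have hfe : P.mlArcs.filter (fun b => (P.phi b).1 = 0)
          = P.mlArcs.filter (fun b => b.1 = ((0 : ℕ), (0 : ℕ))) := by
        refine Finset.filter_congr fun b hb => ?_
        rw [CBPP.phi_fst]
        constructor
        · intro h0
          obtain ⟨_, _, hcase⟩ := CBPP.ml_facts hb
          rcases hcase with ⟨_, hl⟩ | ⟨_, _, _, hsrc, _⟩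
          · have := hl.1; omega
          · exact hsrc h0
        · intro h0; rw [h0]
      rw [hfe]
      exact hfeas.flow_source
    rw [hin, hout]; ring
  · -- flow_mid
    intro j hj1 hj2
    have hjL : j < P.L := by omega
    have hin : P.inflow y j = ∑ q ∈ Finset.Icc 1 P.Q, P.mlIn x (j, q) := by
      unfold CBPP.inflow
      rw [hy]; beta_reduce
      rw [CBPP.sum_y]
      have hfe : P.mlArcs.filter (fun b => (P.phi b).2.1 = j)
          = P.mlArcs.filter (fun b => b.2.1 = j) := by
        refine Finset.filter_congr fun b hb => ?_
        obtain ⟨_, _, hcase⟩ := CBPP.ml_facts hb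
        unfold CBPP.phi
        split
        next h3 =>
          have hbl : b.2.1 = P.L := (hcase.resolve_right fun hc => hc.1 h3).2.2.2.1
          dsimp only
          omega
        next h3 => exact Iff.rfl
      rw [hfe]
      rw [← Finset.sum_fiberwise_of_maps_to (g := fun b => b.2.2)
          (t := Finset.Icc 1 P.Q) ?_ x]
      · refine Finset.sum_congr rfl fun q hq => ?_
        rw [Finset.filter_filter]
        unfold CBPP.mlIn
        refine Finset.sum_congr (Finset.filter_congr fun b _ => ?_) fun _ _ => rfl
        rw [Prod.ext_iff]
      · intro b hb
        obtain ⟨hbm, hb2⟩ := Finset.mem_filter.mp hb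
        obtain ⟨_, _, hcase⟩ := CBPP.ml_facts hbm
        rcases hcase with ⟨_, hl⟩ | ⟨_, _, hc, _, _⟩
        · have := hl.2.2.1; omega
        · exact hc
    have hout : P.outflow y j = ∑ q ∈ Finset.Icc 1 P.Q, P.mlOut x (j, q) := by
      unfold CBPP.outflow
      rw [hy]; beta_reduce
      rw [CBPP.sum_y]
      have hfe : P.mlArcs.filter (fun b => (P.phi b).1 = j)
          = P.mlArcs.filter (fun b => b.1.1 = j) := by
        refine Finset.filter_congr fun b hb => ?_
        rw [CBPP.phi_fst]
      rw [hfe]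
      rw [← Finset.sum_fiberwise_of_maps_to (g := fun b => b.1.2)
          (t := Finset.Icc 1 P.Q) ?_ x]
      · refine Finset.sum_congr rfl fun q hq => ?_
        rw [Finset.filter_filter]
        unfold CBPP.mlOut
        refine Finset.sum_congr (Finset.filter_congr fun b _ => ?_) fun _ _ => rfl
        rw [Prod.ext_iff]
      · intro b hb
        obtain ⟨hbm, hb1⟩ := Finset.mem_filter.mp hb
        obtain ⟨_, hic, _⟩ := CBPP.ml_facts hbm
        exact hic (by omega)
    rw [hin, hout, ← Finset.sum_sub_distrib]
    refine Finset.sum_eq_zero fun q hq => ?_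
    rw [hfeas.flow_mid j q hj1 hj2 hq]
    ring
  · -- flow_sink
    have hin : P.inflow y P.L = z := by
      unfold CBPP.inflow
      rw [hy]; beta_reduce
      rw [CBPP.sum_y]
      have hfe : P.mlArcs.filter (fun b => (P.phi b).2.1 = P.L)
          = P.mlArcs.filter (fun b => b.2.1 = P.L) := by
        refine Finset.filter_congr fun b hb => ?_
        obtain ⟨_, _, hcase⟩ := CBPP.ml_facts hb
        unfold CBPP.phi
        split
        next h3 =>
          have hbl : b.2.1 = P.L := (hcase.resolve_right fun hc => hc.1 h3).2.2.2.1
          dsimp only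
          omega
        next h3 => exact Iff.rfl
      rw [hfe]
      exact hfeas.flow_sink
    have hout : P.outflow y P.L = 0 := by
      unfold CBPP.outflow
      rw [hy]; beta_reduce
      rw [CBPP.sum_y]
      rw [Finset.filter_false_of_mem, Finset.sum_empty]
      intro b hb
      rw [CBPP.phi_fst]
      obtain ⟨hbL, _, hcase⟩ := CBPP.ml_facts hb
      rcases hcase with ⟨_, hl⟩ | ⟨_, hlt, _, _, _⟩
      · have h1 := hl.1; have h2 := hl.2.1; omega
      · omega
    rw [hin, hout]; ring
  · -- color_alt
    intro j hj1 hj2 q hq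
    have hjL : j < P.L := by omega
    have hqQ := Finset.mem_Icc.mp hq
    have hinC : P.inflowC y j q = P.mlOut x (j, q) := by
      unfold CBPP.inflowC
      rw [hy]; beta_reduce
      rw [CBPP.sum_y]
      have hfe : P.mlArcs.filter (fun b => (P.phi b).2.1 = j ∧ (P.phi b).2.2 = q)
          = P.mlArcs.filter (fun b => b.2 = (j, q)) := by
        refine Finset.filter_congr fun b hb => ?_
        obtain ⟨_, _, hcase⟩ := CBPP.ml_facts hb
        rw [Prod.ext_iff]
        unfold CBPP.phi
        split
        next h3 =>
          have hbl : b.2.1 = P.L := (hcase.resolve_right fun hc => hc.1 h3).2.2.2.1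
          dsimp only
          omega
        next h3 => exact Iff.rfl
      rw [hfe]
      exact hfeas.flow_mid j q hj1 hj2 hq
    rw [hinC]
    unfold CBPP.outflowNotC CBPP.mlOut
    rw [hy]; beta_reduce
    rw [CBPP.sum_y]
    refine Finset.sum_le_sum_of_subset_of_nonneg ?_ fun b hb _ =>
      hfeas.nonneg b (Finset.mem_filter.mp hb).1
    intro b hb
    obtain ⟨hbm, hb1⟩ := Finset.mem_filter.mp hb
    refine Finset.mem_filter.mpr ⟨hbm, ?_⟩
    have hb11 : b.1.1 = j := by rw [hb1]
    have hb12 : b.1.2 = q := by rw [hb1]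
    obtain ⟨_, _, hcase⟩ := CBPP.ml_facts hbm
    refine ⟨by rw [CBPP.phi_fst]; exact hb11, ?_⟩
    unfold CBPP.phi
    split
    next h3 => dsimp only; omega
    next h3 =>
      dsimp only
      rcases hcase with ⟨hc, _⟩ | ⟨hne, _⟩
      · exact absurd hc h3
      · rw [← hb12]; exact fun hc => hne (hc)
  · -- demand
    intro u
    rw [hy]; beta_reduce
    rw [CBPP.sum_y]
    have hcu := Finset.mem_Icc.mp (P.hcol u)
    have hfe : P.mlArcs.filter
        (fun b => (P.phi b).2.1 = (P.phi b).1 + P.len u ∧ (P.phi b).2.2 = P.col u)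
        = P.mlArcs.filter
          (fun b => b.2.1 = b.1.1 + P.len u ∧ b.2.2 = P.col u ∧ b.1.2 ≠ P.col u) := by
      refine Finset.filter_congr fun b hb => ?_
      obtain ⟨_, _, hcase⟩ := CBPP.ml_facts hb
      unfold CBPP.phi
      split
      next h3 => dsimp only; omega
      next h3 => dsimp only; omega
    rw [hfe]
    exact hfeas.demand u
end

section
/- For every CBPP instance, the infimum of z over all nonnegative real AF_ml-feasible solutions (x, z) equals the infimum of z over all nonnegative real AF_ca-feasible solutions (x, z); that is, the lower bounds provided by the linear relaxations of formulations AF_ml and AF_ca are the same. -/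
open scoped Classical

theorem transport (C : Finset ℕ) : ∀ (R : Finset ℕ) (r c : ℕ → ℝ),
    (∀ i ∈ R, 0 ≤ r i) → (∀ j ∈ C, 0 ≤ c j) →
    (∑ i ∈ R, r i = ∑ j ∈ C, c j) →
    (∀ q ∈ R, q ∈ C → r q + c q ≤ ∑ i ∈ R, r i) →
    ∃ Y : ℕ → ℕ → ℝ, (∀ i j, 0 ≤ Y i j) ∧ (∀ i, Y i i = 0) ∧
      (∀ i k, i ∉ R ∨ k ∉ C → Y i k = 0) ∧
      (∀ i ∈ R, ∑ k ∈ C, Y i k = r i) ∧ (∀ k ∈ C, ∑ i ∈ R, Y i k = c k) := by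
  classical
  induction C using Finset.induction_on with
  | empty =>
    intro R r c hr hc hsum _
    refine ⟨fun _ _ => 0, by simp, by simp, by simp, ?_, by simp⟩
    intro i hi
    simp only [Finset.sum_empty] at hsum ⊢
    have h0 : ∑ i ∈ R, r i = 0 := by simpa using hsum
    exact ((Finset.sum_eq_zero_iff_of_nonneg hr).1 h0 i hi).symm
  | @insert j C' hj ih =>
    intro R r c hr hc hsum hcond
    set F : ℝ := ∑ i ∈ R, r i with hF
    have hsumC : F = c j + ∑ k ∈ C', c k := by
      rw [hsum, Finset.sum_insert hj]
    have hcj0 : 0 ≤ c j := hc j (Finset.mem_insert_self j C')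
    have hcC' : ∀ k ∈ C', 0 ≤ c k := fun k hk => hc k (Finset.mem_insert_of_mem hk)
    have hsC' : (0:ℝ) ≤ ∑ k ∈ C', c k := Finset.sum_nonneg hcC'
    have hcjF : c j ≤ F := by rw [hsumC]; linarith
    -- lower and upper bounds for the amounts taken from each row for column j
    set lb : ℕ → ℝ := fun i => if i ∈ R ∧ i ∈ C' then max 0 (r i + c i + c j - F) else 0 with hlb
    set ub : ℕ → ℝ := fun i => if i ∈ R ∧ i ≠ j then r i else 0 with hub
    have hlb0 : ∀ i, 0 ≤ lb i := by
      intro i; simp only [hlb]; split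
      · exact le_max_left _ _
      · exact le_refl 0
    have hub0 : ∀ i, 0 ≤ ub i := by
      intro i; simp only [hub]; split
      · exact hr i (by tauto)
      · exact le_refl 0
    have hlbub : ∀ i, lb i ≤ ub i := by
      intro i
      simp only [hlb, hub]
      by_cases h : i ∈ R ∧ i ∈ C'
      · have hij : i ≠ j := fun he => hj (he ▸ h.2)
        rw [if_pos h, if_pos ⟨h.1, hij⟩]
        have hci : c i ≤ ∑ k ∈ C', c k :=
          Finset.single_le_sum hcC' h.2
        have : r i + c i + c j - F ≤ r i := by rw [hsumC]; linarith
        exact max_le (hr i h.1) this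
      · rw [if_neg h]; exact hub0 i
    set Slb : ℝ := ∑ i ∈ R, lb i with hSlb
    set Sub : ℝ := ∑ i ∈ R, ub i with hSub
    have hSlbSub : Slb ≤ Sub := Finset.sum_le_sum (fun i _ => hlbub i)
    -- Sub ≥ c j
    have hSubeq : Sub = ∑ i ∈ R.filter (fun i => ¬ i = j), r i := by
      rw [hSub, Finset.sum_filter]
      apply Finset.sum_congr rfl
      intro i hi
      simp only [hub]
      by_cases hij : i = j
      · rw [if_neg (by tauto), if_neg (by tauto)]
      · rw [if_pos ⟨hi, hij⟩, if_pos hij]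
    have hSubF : c j ≤ Sub := by
      by_cases hjR : j ∈ R
      · have hsplit : F = r j + ∑ i ∈ R.filter (fun i => ¬ i = j), r i := by
          rw [hF, ← Finset.sum_filter_add_sum_filter_not R (fun i => i = j)]
          congr 1
          rw [Finset.filter_eq', if_pos hjR, Finset.sum_singleton]
        have hcnd := hcond j hjR (Finset.mem_insert_self j C')
        rw [hSubeq]
        linarith
      · have : Sub = F := by
          rw [hSub, hF]
          apply Finset.sum_congr rfl
          intro i hi
          simp only [hub]
          rw [if_pos ⟨hi, fun he => hjR (he ▸ hi)⟩]
        rw [this]; exact hcjF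
    -- Slb ≤ c j
    have hSlbcj : Slb ≤ c j := by
      set S : Finset ℕ := (R ∩ C').filter (fun i => 0 < r i + c i + c j - F) with hS
      have hSlbS : Slb = ∑ i ∈ S, (r i + c i + c j - F) := by
        rw [hSlb]
        rw [show ∑ i ∈ S, (r i + c i + c j - F) = ∑ i ∈ S, lb i from ?_]
        · apply (Finset.sum_subset ?_ ?_).symm
          · intro i hi
            rw [hS] at hi
            exact (Finset.mem_inter.1 (Finset.mem_filter.1 hi).1).1
          · intro i hi hni
            simp only [hlb]
            by_cases h : i ∈ R ∧ i ∈ C'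
            · rw [if_pos h]
              have : ¬ 0 < r i + c i + c j - F := by
                intro hpos
                exact hni (by rw [hS]; exact Finset.mem_filter.2 ⟨Finset.mem_inter.2 ⟨h.1, h.2⟩, hpos⟩)
              rw [max_eq_left (by linarith)]
            · rw [if_neg h]
        · apply Finset.sum_congr rfl
          intro i hi
          rw [hS] at hi
          obtain ⟨hiRC, hpos⟩ := Finset.mem_filter.1 hi
          have h12 := Finset.mem_inter.1 hiRC
          simp only [hlb]
          rw [if_pos ⟨h12.1, h12.2⟩, max_eq_right (le_of_lt hpos)]
      by_cases hcard : S.card = 0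
      · rw [hSlbS, Finset.card_eq_zero.1 hcard, Finset.sum_empty]; exact hcj0
      by_cases hcard1 : S.card = 1
      · obtain ⟨i, hi⟩ := Finset.card_eq_one.1 hcard1
        rw [hSlbS, hi, Finset.sum_singleton]
        have hiS : i ∈ S := by rw [hi]; exact Finset.mem_singleton_self i
        rw [hS] at hiS
        obtain ⟨hiRC, _⟩ := Finset.mem_filter.1 hiS
        have h12 := Finset.mem_inter.1 hiRC
        have := hcond i h12.1 (Finset.mem_insert_of_mem h12.2)
        linarith
      · -- card ≥ 2
        have hc2 : (2:ℝ) ≤ (S.card : ℝ) := by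
          have : 2 ≤ S.card := by omega
          exact_mod_cast this
        have hSR : S ⊆ R := fun i hi => (Finset.mem_inter.1 (Finset.mem_filter.1 hi).1).1
        have hSC : S ⊆ C' := fun i hi => (Finset.mem_inter.1 (Finset.mem_filter.1 hi).1).2
        have hrS : ∑ i ∈ S, r i ≤ F :=
          Finset.sum_le_sum_of_subset_of_nonneg hSR (fun i hi _ => hr i hi)
        have hcS : ∑ i ∈ S, c i ≤ ∑ k ∈ C', c k :=
          Finset.sum_le_sum_of_subset_of_nonneg hSC (fun i hi _ => hcC' i hi)
        have hexp : Slb = ∑ i ∈ S, r i + ∑ i ∈ S, c i + (S.card : ℝ) * (c j - F) := by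
          rw [hSlbS]
          have : ∀ i ∈ S, r i + c i + c j - F = r i + c i + (c j - F) := by
            intro i _; ring
          rw [Finset.sum_congr rfl this, Finset.sum_add_distrib, Finset.sum_add_distrib,
            Finset.sum_const, nsmul_eq_mul]
        nlinarith [mul_nonneg (by linarith : (0:ℝ) ≤ (S.card:ℝ) - 2)
          (by linarith : (0:ℝ) ≤ F - c j)]
    -- choose the amounts a i ∈ [lb i, ub i] with total c j
    have hamt : ∃ a : ℕ → ℝ, (∀ i, lb i ≤ a i) ∧ (∀ i, a i ≤ ub i) ∧ ∑ i ∈ R, a i = c j := by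
      by_cases heq : Sub = Slb
      · refine ⟨lb, fun i => le_refl _, fun i => ?_, by linarith⟩
        have hpt : ∀ i ∈ R, ub i - lb i = 0 := by
          have hs0 : ∑ i ∈ R, (ub i - lb i) = 0 := by
            rw [Finset.sum_sub_distrib]; rw [hSub, hSlb] at heq; linarith
          intro i hi
          exact (Finset.sum_eq_zero_iff_of_nonneg
            (fun i _ => by linarith [hlbub i])).1 hs0 i hi
        by_cases hiR : i ∈ R
        · linarith [hpt i hiR]
        · have : lb i = 0 := by simp only [hlb]; rw [if_neg (by tauto)]
          rw [this]; exact hub0 i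
      · have hpos : 0 < Sub - Slb := sub_pos.2 (lt_of_le_of_ne hSlbSub (fun h => heq h.symm))
        set t : ℝ := (c j - Slb) / (Sub - Slb) with ht
        have ht0 : 0 ≤ t := div_nonneg (by linarith) (le_of_lt hpos)
        have ht1 : t ≤ 1 := by
          rw [ht, div_le_one hpos]; linarith
        refine ⟨fun i => lb i + t * (ub i - lb i), ?_, ?_, ?_⟩
        · intro i
          show lb i ≤ lb i + t * (ub i - lb i)
          have := mul_nonneg ht0 (by linarith [hlbub i] : (0:ℝ) ≤ ub i - lb i)
          linarith
        · intro i
          show lb i + t * (ub i - lb i) ≤ ub i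
          nlinarith [hlbub i]
        · have : ∑ i ∈ R, (lb i + t * (ub i - lb i)) =
              Slb + t * (Sub - Slb) := by
            rw [Finset.sum_add_distrib, ← Finset.mul_sum, Finset.sum_sub_distrib,
              hSlb, hSub]
          rw [this, ht, div_mul_cancel₀ _ (ne_of_gt hpos)]
          ring
    obtain ⟨a, halb, haub, hasum⟩ := hamt
    have ha0 : ∀ i, 0 ≤ a i := fun i => le_trans (hlb0 i) (halb i)
    have haj : a j = 0 := by
      have : ub j = 0 := by simp only [hub]; rw [if_neg (by tauto)]
      linarith [haub j, ha0 j]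
    have haR : ∀ i, i ∉ R → a i = 0 := by
      intro i hiR
      have : ub i = 0 := by simp only [hub]; rw [if_neg (by tauto)]
      linarith [haub i, ha0 i]
    have har : ∀ i ∈ R, a i ≤ r i := by
      intro i hi
      refine le_trans (haub i) ?_
      simp only [hub]
      by_cases h : i ∈ R ∧ i ≠ j
      · rw [if_pos h]
      · rw [if_neg h]; exact hr i hi
    -- recurse
    obtain ⟨Y', hY'0, hY'diag, hY'supp, hY'row, hY'col⟩ :=
      ih R (fun i => r i - a i) c (fun i hi => by simpa using har i hi) hcC'
        (by
          rw [Finset.sum_sub_distrib, hasum, ← hF, hsumC]; ring)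
        (by
          intro q hq hqC'
          have hlbq : lb q ≤ a q := halb q
          have : max 0 (r q + c q + c j - F) ≤ a q := by
            simp only [hlb] at hlbq
            rwa [if_pos ⟨hq, hqC'⟩] at hlbq
          have h1 : r q + c q + c j - F ≤ a q := le_trans (le_max_right _ _) this
          have h2 : ∑ i ∈ R, (r i - a i) = F - c j := by
            rw [Finset.sum_sub_distrib, hasum, ← hF]
          show r q - a q + c q ≤ ∑ i ∈ R, (r i - a i)
          rw [h2]; linarith)
    refine ⟨fun i k => Y' i k + if k = j then a i else 0, ?_, ?_, ?_, ?_, ?_⟩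
    · intro i k
      show 0 ≤ Y' i k + if k = j then a i else 0
      have := hY'0 i k
      split
      · linarith [ha0 i]
      · linarith
    · intro i
      show Y' i i + (if i = j then a i else 0) = 0
      rw [hY'diag i]
      split
      · next h => rw [h]; simpa using haj
      · simp
    · intro i k hik
      show Y' i k + (if k = j then a i else 0) = 0
      rcases hik with hiR | hkC
      · rw [hY'supp i k (Or.inl hiR), haR i hiR]; simp
      · have hkj : k ≠ j := fun h => hkC (h ▸ Finset.mem_insert_self j C')
        have hkC' : k ∉ C' := fun h => hkC (Finset.mem_insert_of_mem h)
        rw [hY'supp i k (Or.inr hkC'), if_neg hkj]; simp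
    · intro i hi
      show ∑ k ∈ insert j C', (Y' i k + if k = j then a i else 0) = r i
      rw [Finset.sum_insert hj]
      have h1 : ∑ k ∈ C', (Y' i k + if k = j then a i else 0) = r i - a i := by
        rw [show ∑ k ∈ C', (Y' i k + if k = j then a i else 0) = ∑ k ∈ C', Y' i k from
          Finset.sum_congr rfl (fun k hk => by
            rw [if_neg (fun h : k = j => hj (h ▸ hk))]; ring), hY'row i hi]
      rw [h1, if_pos rfl, hY'supp i j (Or.inr hj)]
      ring
    · intro k hk
      show ∑ i ∈ R, (Y' i k + if k = j then a i else 0) = c k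
      rcases Finset.mem_insert.1 hk with hkj | hkC'
      · subst hkj
        rw [show ∑ i ∈ R, (Y' i k + if k = k then a i else 0) = ∑ i ∈ R, a i from
          Finset.sum_congr rfl (fun i hi => by
            rw [if_pos rfl, hY'supp i k (Or.inr hj)]; ring), hasum]
      · have hkj : k ≠ j := fun h => hj (h ▸ hkC')
        rw [show ∑ i ∈ R, (Y' i k + if k = j then a i else 0) = ∑ i ∈ R, Y' i k from
          Finset.sum_congr rfl (fun i _ => by rw [if_neg hkj]; ring), hY'col k hkC']
namespace CBPP

variable (P : CBPP)

/-- The CA-color of an AF_ml arc: `Q+1` for loss arcs, else the target layer color. -/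
def caCol (b : (ℕ × ℕ) × ℕ × ℕ) : ℕ := if b.2.2 = b.1.2 then P.Q + 1 else b.2.2

/-- Projection of an AF_ml arc to an AF_ca arc. -/
def proj (b : (ℕ × ℕ) × ℕ × ℕ) : ℕ × ℕ × ℕ := (b.1.1, b.2.1, P.caCol b)

lemma mem_arcs {a : ℕ × ℕ × ℕ} : a ∈ P.arcs ↔ P.IsArc a := by
  constructor
  · intro h; exact (Finset.mem_filter.1 h).2
  · intro h
    refine Finset.mem_filter.2 ⟨?_, h⟩
    rcases h with hitem | hloss
    · obtain ⟨h1, h2, h3, _⟩ := hitem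
      have := (Finset.mem_Icc.1 h3).2
      simp only [Finset.mem_product, Finset.mem_range]
      omega
    · obtain ⟨h1, h2, h3, h4⟩ := hloss
      have hL := P.hL
      simp only [Finset.mem_product, Finset.mem_range]
      omega

lemma mem_mlArcs {b : (ℕ × ℕ) × ℕ × ℕ} : b ∈ P.mlArcs ↔ P.IsMlArc b := by
  constructor
  · intro h; exact (Finset.mem_filter.1 h).2
  · intro h
    refine Finset.mem_filter.2 ⟨?_, h⟩
    simp only [Finset.mem_product, Finset.mem_range]
    rcases h with hsrc | hitem | hloss
    · obtain ⟨h1, u, hu1, hu2⟩ := hsrc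
      have h3 := (Finset.mem_Icc.1 (P.hcol u)).2
      have h4 := P.hlenLe u
      have := congrArg Prod.fst h1
      have := congrArg Prod.snd h1
      omega
    · obtain ⟨h1, h2, h3, h4, h5, u, hu1, hu2⟩ := hitem
      have h6 := (Finset.mem_Icc.1 h4).2
      have h7 := (Finset.mem_Icc.1 (P.hcol u)).2
      omega
    · obtain ⟨h1, h2, h3, h4, h5⟩ := hloss
      have h6 := (Finset.mem_Icc.1 h5).2
      have hL := P.hL
      omega

lemma colQ1 {q : ℕ} (hq : q ∈ Finset.Icc 1 P.Q) : q ≠ P.Q + 1 := by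
  have := (Finset.mem_Icc.1 hq).2; omega

lemma proj_mem {b : (ℕ × ℕ) × ℕ × ℕ} (hb : b ∈ P.mlArcs) : P.proj b ∈ P.arcs := by
  rw [P.mem_mlArcs] at hb
  rw [P.mem_arcs]
  rcases hb with hsrc | hitem | hloss
  · obtain ⟨h1, u, hu1, hu2⟩ := hsrc
    have hcu := P.hcol u
    have h12 : b.1.2 = 0 := by rw [h1]
    have hne : b.2.2 ≠ b.1.2 := by
      rw [h12, ← hu2]; have := (Finset.mem_Icc.1 hcu).1; omega
    have h11 : b.1.1 = 0 := by rw [h1]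
    have hproj : P.proj b = (b.1.1, b.2.1, b.2.2) := by
      simp only [proj, caCol, if_neg hne]
    left
    rw [hproj]
    refine ⟨?_, ?_, ?_, u, ?_, hu2⟩
    · show b.1.1 < b.2.1
      rw [h11, ← hu1]; exact P.hlenPos u
    · rw [← hu1]; exact P.hlenLe u
    · rw [← hu2]; exact hcu
    · show P.len u = b.2.1 - b.1.1
      omega
  · obtain ⟨h1, h2, h3, h4, h5, u, hu1, hu2⟩ := hitem
    have hne : b.2.2 ≠ b.1.2 := h5
    have hproj : P.proj b = (b.1.1, b.2.1, b.2.2) := by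
      simp only [proj, caCol, if_neg hne]
    left
    rw [hproj]
    exact ⟨h2, h3, hu2 ▸ P.hcol u, u, hu1, hu2⟩
  · obtain ⟨h1, h2, h3, h4, h5⟩ := hloss
    right
    refine ⟨?_, ?_, ?_, ?_⟩ <;> simp only [proj, caCol, if_pos h4]
    · exact h3
    · exact h1
    · exact h2

/-- Master fiber-sum lemma relating CA sums and ML sums. -/
lemma sum_proj (xml : (ℕ × ℕ) × ℕ × ℕ → ℝ) (x : ℕ × ℕ × ℕ → ℝ)
    (hx : ∀ a ∈ P.arcs, x a = ∑ b ∈ P.mlArcs.filter (fun b => P.proj b = a), xml b)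
    (p : ℕ × ℕ × ℕ → Prop) [DecidablePred p] :
    ∑ a ∈ P.arcs.filter p, x a =
      ∑ b ∈ P.mlArcs.filter (fun b => p (P.proj b)), xml b := by
  classical
  rw [← Finset.sum_fiberwise_of_maps_to (g := P.proj)
      (t := P.arcs.filter p) (s := P.mlArcs.filter (fun b => p (P.proj b)))
      (fun b hb => by
        obtain ⟨hb1, hb2⟩ := Finset.mem_filter.1 hb
        exact Finset.mem_filter.2 ⟨P.proj_mem hb1, hb2⟩) xml]
  apply Finset.sum_congr rfl
  intro a ha
  obtain ⟨haA, hap⟩ := Finset.mem_filter.1 ha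
  rw [hx a haA]
  apply Finset.sum_congr _ (fun _ _ => rfl)
  rw [Finset.filter_filter]
  apply Finset.filter_congr
  intro b _
  constructor
  · intro h; exact ⟨by rw [h]; exact hap, h⟩
  · intro h; exact h.2

end CBPP
namespace CBPP

variable (P : CBPP)

lemma ml_tgt_pos {b : (ℕ × ℕ) × ℕ × ℕ} (hb : b ∈ P.mlArcs) : b.2.1 ≠ 0 := by
  rw [P.mem_mlArcs] at hb
  rcases hb with ⟨_, u, hu1, _⟩ | ⟨_, h2, _⟩ | ⟨_, _, h3, _⟩
  · have := P.hlenPos u; omega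
  · omega
  · have := P.hL; omega

lemma ml_src_char {b : (ℕ × ℕ) × ℕ × ℕ} (hb : b ∈ P.mlArcs) (h : b.1.1 = 0) :
    b.1 = (0, 0) := by
  rw [P.mem_mlArcs] at hb
  rcases hb with ⟨h1, _⟩ | ⟨h1, _⟩ | ⟨h1, _⟩
  · exact h1
  · omega
  · omega

lemma ml_layer_bounds {b : (ℕ × ℕ) × ℕ × ℕ} (hb : b ∈ P.mlArcs) (h : b.1.1 ≠ 0) :
    1 ≤ b.1.1 ∧ b.1.1 ≤ P.L - 1 ∧ b.1.2 ∈ Finset.Icc 1 P.Q := by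
  rw [P.mem_mlArcs] at hb
  rcases hb with ⟨h1, _⟩ | ⟨h1, h2, h3, h4, _⟩ | ⟨h1, h2, h3, h4, h5⟩
  · exact absurd (by rw [h1]) h
  · exact ⟨h1, by omega, h4⟩
  · exact ⟨h1, h2, h5⟩

lemma ml_tgt_col {b : (ℕ × ℕ) × ℕ × ℕ} (hb : b ∈ P.mlArcs) (h : b.2.1 ≠ P.L) :
    P.caCol b = b.2.2 ∧ b.2.2 ∈ Finset.Icc 1 P.Q := by
  rw [P.mem_mlArcs] at hb
  rcases hb with ⟨h1, u, hu1, hu2⟩ | ⟨h1, h2, h3, h4, h5, u, hu1, hu2⟩ | ⟨h1, h2, h3, _⟩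
  · have hc := P.hcol u
    have h12 : b.1.2 = 0 := by rw [h1]
    have : b.2.2 ≠ b.1.2 := by
      rw [h12, ← hu2]; have := (Finset.mem_Icc.1 hc).1; omega
    exact ⟨by simp only [caCol, if_neg this], hu2 ▸ hc⟩
  · exact ⟨by simp only [caCol, if_neg h5], hu2 ▸ P.hcol u⟩
  · exact absurd h3 h

lemma ml_from_layer {b : (ℕ × ℕ) × ℕ × ℕ} (hb : b ∈ P.mlArcs) (h : b.1.1 ≠ 0) :
    P.caCol b ≠ b.1.2 := by
  rw [P.mem_mlArcs] at hb
  rcases hb with ⟨h1, _⟩ | ⟨h1, h2, h3, h4, h5, _⟩ | ⟨h1, h2, h3, h4, h5⟩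
  · exact absurd (by rw [h1]) h
  · simp only [caCol, if_neg h5]; exact h5
  · simp only [caCol, if_pos h4]
    have := (Finset.mem_Icc.1 h5).2; omega

lemma ca_tgt_pos {a : ℕ × ℕ × ℕ} (ha : a ∈ P.arcs) : a.2.1 ≠ 0 := by
  rw [P.mem_arcs] at ha
  rcases ha with ⟨h1, _⟩ | ⟨_, h2, _⟩
  · omega
  · have := P.hL; omega

lemma ca_src_lt {a : ℕ × ℕ × ℕ} (ha : a ∈ P.arcs) : a.1 < P.L := by
  rw [P.mem_arcs] at ha
  have := P.hL
  rcases ha with ⟨h1, h2, _⟩ | ⟨_, _, _, h4⟩ <;> omega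

lemma ca_col_mem {a : ℕ × ℕ × ℕ} (ha : a ∈ P.arcs) : a.2.2 ∈ Finset.Icc 1 (P.Q + 1) := by
  rw [P.mem_arcs] at ha
  rcases ha with ⟨_, _, h3, _⟩ | ⟨h1, _⟩
  · have := Finset.mem_Icc.1 h3; exact Finset.mem_Icc.2 (by omega)
  · rw [h1]; exact Finset.mem_Icc.2 (by omega)

lemma ca_tgt_col {a : ℕ × ℕ × ℕ} (ha : a ∈ P.arcs) (h : a.2.1 ≠ P.L) :
    a.2.2 ∈ Finset.Icc 1 P.Q := by
  rw [P.mem_arcs] at ha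
  rcases ha with ⟨_, _, h3, _⟩ | ⟨_, h2, _⟩
  · exact h3
  · exact absurd h2 h

/-- outflow splits into the color-`q` part and the rest. -/
lemma outflow_split (x : ℕ × ℕ × ℕ → ℝ) (j q : ℕ) :
    P.outflow x j = (∑ a ∈ P.arcs.filter (fun a => a.1 = j ∧ a.2.2 = q), x a) +
      P.outflowNotC x j q := by
  classical
  rw [outflow, outflowNotC, ← Finset.sum_filter_add_sum_filter_not
    (P.arcs.filter (fun a => a.1 = j)) (fun a => a.2.2 = q)]
  rw [Finset.filter_filter, Finset.filter_filter]

end CBPP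
namespace CBPP

variable (P : CBPP)

theorem ml_to_ca {xml : (ℕ × ℕ) × ℕ × ℕ → ℝ} {z : ℝ} (h : P.AFmlFeasible xml z) :
    ∃ x : ℕ × ℕ × ℕ → ℝ, P.AFcaFeasible x z := by
  classical
  set x : ℕ × ℕ × ℕ → ℝ :=
    fun a => ∑ b ∈ P.mlArcs.filter (fun b => P.proj b = a), xml b with hxdef
  have key := P.sum_proj xml x (fun a _ => rfl)
  have hnn : ∀ a ∈ P.arcs, 0 ≤ x a := by
    intro a _
    exact Finset.sum_nonneg (fun b hb => h.nonneg b (Finset.mem_filter.1 hb).1)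
  have hin : ∀ j, P.inflow x j = ∑ b ∈ P.mlArcs.filter (fun b => b.2.1 = j), xml b := by
    intro j
    rw [inflow]; exact key _
  have hout : ∀ j, P.outflow x j = ∑ b ∈ P.mlArcs.filter (fun b => b.1.1 = j), xml b := by
    intro j
    rw [outflow]; exact key _
  have hL := P.hL
  refine ⟨x, hnn, h.znonneg, ?_, ?_, ?_, ?_, ?_⟩
  · -- source
    have h1 : P.inflow x 0 = 0 := by
      rw [hin, Finset.filter_eq_empty_iff.2 (fun {b} hb hb0 => P.ml_tgt_pos hb hb0),
        Finset.sum_empty]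
    have h2 : P.outflow x 0 = z := by
      rw [hout, ← h.flow_source, mlOut]
      apply Finset.sum_congr _ (fun _ _ => rfl)
      apply Finset.filter_congr
      intro b hb
      constructor
      · intro hb0; exact P.ml_src_char hb hb0
      · intro hb0; rw [hb0]
    rw [h1, h2]; ring
  · -- mid
    intro j hj1 hj2
    have hjL : j ≠ P.L := by omega
    have hj0 : j ≠ 0 := by omega
    have e1 : P.inflow x j = ∑ q ∈ Finset.Icc 1 P.Q, P.mlIn xml (j, q) := by
      rw [hin, ← Finset.sum_fiberwise_of_maps_to (g := fun b => b.2.2)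
        (t := Finset.Icc 1 P.Q)
        (fun b hb => by
          obtain ⟨hb1, hb2⟩ := Finset.mem_filter.1 hb
          exact (P.ml_tgt_col hb1 (hb2 ▸ hjL)).2) xml]
      apply Finset.sum_congr rfl
      intro q _
      rw [mlIn, Finset.filter_filter]
      apply Finset.sum_congr _ (fun _ _ => rfl)
      apply Finset.filter_congr
      intro b _
      rw [Prod.ext_iff]
    have e2 : P.outflow x j = ∑ q ∈ Finset.Icc 1 P.Q, P.mlOut xml (j, q) := by
      rw [hout, ← Finset.sum_fiberwise_of_maps_to (g := fun b => b.1.2)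
        (t := Finset.Icc 1 P.Q)
        (fun b hb => by
          obtain ⟨hb1, hb2⟩ := Finset.mem_filter.1 hb
          exact (P.ml_layer_bounds hb1 (hb2 ▸ hj0)).2.2) xml]
      apply Finset.sum_congr rfl
      intro q _
      rw [mlOut, Finset.filter_filter]
      apply Finset.sum_congr _ (fun _ _ => rfl)
      apply Finset.filter_congr
      intro b _
      rw [Prod.ext_iff]
    rw [e1, e2, ← Finset.sum_sub_distrib]
    exact Finset.sum_eq_zero (fun q hq => by rw [h.flow_mid j q hj1 hj2 hq]; ring)
  · -- sink
    have h1 : P.inflow x P.L = z := by rw [hin]; exact h.flow_sink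
    have h2 : P.outflow x P.L = 0 := by
      rw [hout, Finset.filter_eq_empty_iff.2 ?_, Finset.sum_empty]
      intro b hb hbL
      by_cases hb0 : b.1.1 = 0
      · omega
      · have := (P.ml_layer_bounds hb hb0).2.1; omega
    rw [h1, h2]; ring
  · -- color alternation
    intro j hj1 hj2 q hq
    have hjL : j ≠ P.L := by omega
    have e1 : P.inflowC x j q = P.mlIn xml (j, q) := by
      rw [inflowC]
      refine (key (fun a => a.2.1 = j ∧ a.2.2 = q)).trans ?_
      rw [mlIn]
      apply Finset.sum_congr _ (fun _ _ => rfl)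
      apply Finset.filter_congr
      intro b hb
      show b.2.1 = j ∧ P.caCol b = q ↔ b.2 = (j, q)
      rw [Prod.ext_iff]
      constructor
      · rintro ⟨hb1, hb2⟩
        exact ⟨hb1, by
          rw [← (P.ml_tgt_col hb (by rw [hb1]; exact hjL)).1]; exact hb2⟩
      · rintro ⟨hb1, hb2⟩
        exact ⟨hb1, by
          rw [(P.ml_tgt_col hb (by rw [hb1]; exact hjL)).1]; exact hb2⟩
    have e2 : P.mlOut xml (j, q) ≤ P.outflowNotC x j q := by
      rw [outflowNotC]
      refine le_of_le_of_eq ?_ (key (fun a => a.1 = j ∧ a.2.2 ≠ q)).symm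
      rw [mlOut]
      apply Finset.sum_le_sum_of_subset_of_nonneg
      · intro b hb
        obtain ⟨hb1, hb2⟩ := Finset.mem_filter.1 hb
        have hb11 : b.1.1 = j := by rw [hb2]
        have hne0 : b.1.1 ≠ 0 := by omega
        have hcc : P.caCol b ≠ q := by
          have := P.ml_from_layer hb1 hne0
          rw [hb2] at this
          exact this
        exact Finset.mem_filter.2 ⟨hb1, hb11, hcc⟩
      · intro b hb _
        exact h.nonneg b (Finset.mem_filter.1 hb).1
    rw [e1, h.flow_mid j q hj1 hj2 hq]
    exact e2
  · -- demand
    intro u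
    rw [← h.demand u]
    refine (key (fun a => a.2.1 = a.1 + P.len u ∧ a.2.2 = P.col u)).trans ?_
    apply Finset.sum_congr _ (fun _ _ => rfl)
    apply Finset.filter_congr
    intro b _
    have hcu : P.col u ≠ P.Q + 1 := P.colQ1 (P.hcol u)
    show b.2.1 = b.1.1 + P.len u ∧ P.caCol b = P.col u ↔
      b.2.1 = b.1.1 + P.len u ∧ b.2.2 = P.col u ∧ b.1.2 ≠ P.col u
    constructor
    · rintro ⟨h1, h2⟩
      refine ⟨h1, ?_, ?_⟩
      · by_cases hd : b.2.2 = b.1.2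
        · exact absurd h2 (by simp only [caCol, if_pos hd]; exact fun he => hcu he.symm)
        · simpa only [caCol, if_neg hd] using h2
      · by_cases hd : b.2.2 = b.1.2
        · exact absurd h2 (by simp only [caCol, if_pos hd]; exact fun he => hcu he.symm)
        · simp only [caCol, if_neg hd] at h2
          rw [← h2]; exact fun he => hd he.symm
    · rintro ⟨h1, h2, h3⟩
      have hd : b.2.2 ≠ b.1.2 := by rw [h2]; exact fun he => h3 he.symm
      exact ⟨h1, by simp only [caCol, if_neg hd]; exact h2⟩

end CBPP
namespace CBPP

variable (P : CBPP)

lemma ml_col_le {b : (ℕ × ℕ) × ℕ × ℕ} (hb : b ∈ P.mlArcs) (h : b.2.2 ≠ b.1.2) :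
    b.2.2 ∈ Finset.Icc 1 P.Q := by
  rw [P.mem_mlArcs] at hb
  rcases hb with ⟨_, u, _, hu2⟩ | ⟨_, _, _, _, _, u, _, hu2⟩ | ⟨_, _, _, h4, _⟩
  · exact hu2 ▸ P.hcol u
  · exact hu2 ▸ P.hcol u
  · exact absurd h4 h

lemma caCol_loss {b : (ℕ × ℕ) × ℕ × ℕ} (hb : b ∈ P.mlArcs) (h : P.caCol b = P.Q + 1) :
    b.2.2 = b.1.2 := by
  by_contra hne
  have h1 : P.caCol b = b.2.2 := by simp only [caCol, if_neg hne]
  have := (Finset.mem_Icc.1 (P.ml_col_le hb hne)).2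
  omega

lemma caCol_item {b : (ℕ × ℕ) × ℕ × ℕ} (h : b.2.2 ≠ b.1.2) : P.caCol b = b.2.2 := by
  simp only [caCol, if_neg h]

lemma ml_col_target {b : (ℕ × ℕ) × ℕ × ℕ} (hb : b ∈ P.mlArcs)
    (h : P.caCol b ≠ P.Q + 1) : P.caCol b = b.2.2 := by
  by_cases hne : b.2.2 = b.1.2
  · exact absurd (by simp only [caCol, if_pos hne]) h
  · exact P.caCol_item hne

/-- The canonical AF_ml arc over CA arc `a` leaving layer `q'`. -/
def psi (a : ℕ × ℕ × ℕ) (q' : ℕ) : (ℕ × ℕ) × ℕ × ℕ :=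
  ((a.1, q'), (a.2.1, if a.2.2 = P.Q + 1 then q' else a.2.2))

lemma psi_spec {a : ℕ × ℕ × ℕ} (ha : a ∈ P.arcs) (ha1 : a.1 ≠ 0) {q' : ℕ}
    (hq' : q' ∈ Finset.Icc 1 P.Q) (hne : q' ≠ a.2.2) :
    P.psi a q' ∈ P.mlArcs ∧ P.proj (P.psi a q') = a := by
  have hq'2 := Finset.mem_Icc.1 hq'
  rw [P.mem_arcs] at ha
  rcases ha with ⟨h1, h2, h3, u, hu1, hu2⟩ | ⟨h1, h2, h3, h4⟩
  · -- item arc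
    have hQ : a.2.2 ≠ P.Q + 1 := P.colQ1 h3
    have hpsi : P.psi a q' = ((a.1, q'), (a.2.1, a.2.2)) := by
      simp only [psi, if_neg hQ]
    constructor
    · rw [hpsi, P.mem_mlArcs]
      exact Or.inr (Or.inl ⟨Nat.one_le_iff_ne_zero.2 ha1, h1, h2, hq',
        fun he => hne he.symm, u, hu1, hu2⟩)
    · rw [hpsi, proj, caCol]
      have : a.2.2 ≠ q' := fun he => hne he.symm
      simp only [if_neg this]
  · -- loss arc
    have hpsi : P.psi a q' = ((a.1, q'), (a.2.1, q')) := by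
      simp only [psi, if_pos h1]
    constructor
    · rw [hpsi, P.mem_mlArcs]
      exact Or.inr (Or.inr ⟨Nat.one_le_iff_ne_zero.2 ha1, h4, h2, rfl, hq'⟩)
    · rw [hpsi, proj]
      have hc : P.caCol ((a.1, q'), (a.2.1, q')) = P.Q + 1 := by
        exact if_pos rfl
      rw [hc, ← h1]

lemma psi_proj {b : (ℕ × ℕ) × ℕ × ℕ} (hb : b ∈ P.mlArcs) :
    P.psi (P.proj b) b.1.2 = b := by
  by_cases h : P.caCol b = P.Q + 1
  · have h2 := P.caCol_loss hb h
    simp only [psi, proj, if_pos h]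
    exact Prod.ext rfl (Prod.ext rfl (by show (if P.caCol b = P.Q + 1 then b.1.2 else P.caCol b) = b.2.2; rw [if_pos h]; exact h2.symm))
  · have h2 := P.ml_col_target hb h
    simp only [psi, proj, if_neg h]
    exact Prod.ext rfl (Prod.ext rfl (by show (if P.caCol b = P.Q + 1 then b.1.2 else P.caCol b) = b.2.2; rw [if_neg h]; exact h2))

lemma inflow_split (x : ℕ × ℕ × ℕ → ℝ) (j : ℕ) (hj : j ≠ P.L) :
    P.inflow x j = ∑ q ∈ Finset.Icc 1 P.Q, P.inflowC x j q := by
  classical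
  rw [inflow, ← Finset.sum_fiberwise_of_maps_to (g := fun a => a.2.2)
    (t := Finset.Icc 1 P.Q)
    (fun a ha => by
      obtain ⟨ha1, ha2⟩ := Finset.mem_filter.1 ha
      exact P.ca_tgt_col ha1 (ha2 ▸ hj)) x]
  apply Finset.sum_congr rfl
  intro q _
  rw [inflowC, Finset.filter_filter]

lemma outflow_split_colors (x : ℕ × ℕ × ℕ → ℝ) (j : ℕ) :
    P.outflow x j = ∑ k ∈ Finset.Icc 1 (P.Q + 1),
      ∑ a ∈ P.arcs.filter (fun a => a.1 = j ∧ a.2.2 = k), x a := by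
  classical
  rw [outflow, ← Finset.sum_fiberwise_of_maps_to (g := fun a => a.2.2)
    (t := Finset.Icc 1 (P.Q + 1))
    (fun a ha => P.ca_col_mem (Finset.mem_filter.1 ha).1) x]
  apply Finset.sum_congr rfl
  intro q _
  rw [Finset.filter_filter]

end CBPP
namespace CBPP

variable (P : CBPP)

theorem ca_to_ml {x : ℕ × ℕ × ℕ → ℝ} {z : ℝ} (h : P.AFcaFeasible x z) :
    ∃ xml : (ℕ × ℕ) × ℕ × ℕ → ℝ, P.AFmlFeasible xml z := by
  classical
  have hL := P.hL
  -- total outgoing flow of color k at vertex i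
  set T : ℕ → ℕ → ℝ :=
    fun i k => ∑ a ∈ P.arcs.filter (fun a => a.1 = i ∧ a.2.2 = k), x a with hT
  have hTnn : ∀ i k, 0 ≤ T i k := fun i k =>
    Finset.sum_nonneg (fun a ha => h.nonneg a (Finset.mem_filter.1 ha).1)
  have hTzero : ∀ i k, T i k = 0 → ∀ a ∈ P.arcs, a.1 = i → a.2.2 = k → x a = 0 := by
    intro i k h0 a ha h1 h2
    exact (Finset.sum_eq_zero_iff_of_nonneg
      (fun a ha => h.nonneg a (Finset.mem_filter.1 ha).1)).1 h0 a
      (Finset.mem_filter.2 ⟨ha, h1, h2⟩)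
  -- the per-vertex transportation solution
  have hvertex : ∀ i, 1 ≤ i → i ≤ P.L - 1 → ∃ Y : ℕ → ℕ → ℝ,
      (∀ q k, 0 ≤ Y q k) ∧ (∀ q, Y q q = 0) ∧
      (∀ q ∈ Finset.Icc 1 P.Q, ∑ k ∈ Finset.Icc 1 (P.Q + 1), Y q k = P.inflowC x i q) ∧
      (∀ k ∈ Finset.Icc 1 (P.Q + 1), ∑ q ∈ Finset.Icc 1 P.Q, Y q k = T i k) := by
    intro i hi1 hi2
    have hiL : i ≠ P.L := by omega
    have hsum : ∑ q ∈ Finset.Icc 1 P.Q, P.inflowC x i q =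
        ∑ k ∈ Finset.Icc 1 (P.Q + 1), T i k := by
      rw [← P.inflow_split x i hiL, ← P.outflow_split_colors x i]
      have := h.flow_mid i hi1 hi2
      linarith
    obtain ⟨Y, hY0, hYd, _, hYr, hYc⟩ := transport (Finset.Icc 1 (P.Q + 1))
      (Finset.Icc 1 P.Q) (fun q => P.inflowC x i q) (T i)
      (fun q _ => Finset.sum_nonneg (fun a ha => h.nonneg a (Finset.mem_filter.1 ha).1))
      (fun k _ => hTnn i k) hsum
      (by
        intro q hq hqC
        have halt := h.color_alt i hi1 hi2 q hq
        have hsp := P.outflow_split x i q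
        have : ∑ i_1 ∈ Finset.Icc 1 P.Q, P.inflowC x i i_1 = P.inflow x i :=
          (P.inflow_split x i hiL).symm
        rw [this]
        have := h.flow_mid i hi1 hi2
        simp only [hT]
        linarith)
    exact ⟨Y, hY0, hYd, hYr, hYc⟩
  choose Yfun hY0 hYd hYr hYc using fun i (hi : 1 ≤ i ∧ i ≤ P.L - 1) => hvertex i hi.1 hi.2
  set Y : ℕ → ℕ → ℕ → ℝ := fun i =>
    if hi : 1 ≤ i ∧ i ≤ P.L - 1 then Yfun i hi else fun _ _ => 0 with hYdef
  have hY0' : ∀ i q k, 0 ≤ Y i q k := by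
    intro i q k; simp only [hYdef]; split
    · exact hY0 _ _ _ _
    · exact le_refl 0
  have hYd' : ∀ i q, Y i q q = 0 := by
    intro i q; simp only [hYdef]; split
    · exact hYd _ _ _
    · rfl
  have hYr' : ∀ i, 1 ≤ i → i ≤ P.L - 1 → ∀ q ∈ Finset.Icc 1 P.Q,
      ∑ k ∈ Finset.Icc 1 (P.Q + 1), Y i q k = P.inflowC x i q := by
    intro i h1 h2 q hq; simp only [hYdef]; rw [dif_pos ⟨h1, h2⟩]; exact hYr i ⟨h1, h2⟩ q hq
  have hYc' : ∀ i, 1 ≤ i → i ≤ P.L - 1 → ∀ k ∈ Finset.Icc 1 (P.Q + 1),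
      ∑ q ∈ Finset.Icc 1 P.Q, Y i q k = T i k := by
    intro i h1 h2 k hk; simp only [hYdef]; rw [dif_pos ⟨h1, h2⟩]; exact hYc i ⟨h1, h2⟩ k hk
  have hYzero : ∀ i, 1 ≤ i → i ≤ P.L - 1 → ∀ q ∈ Finset.Icc 1 P.Q,
      ∀ k ∈ Finset.Icc 1 (P.Q + 1), T i k = 0 → Y i q k = 0 := by
    intro i h1 h2 q hq k hk h0
    have := hYc' i h1 h2 k hk
    rw [h0] at this
    exact (Finset.sum_eq_zero_iff_of_nonneg (fun q _ => hY0' i q k)).1 this q hq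
  -- vertex bounds for CA arcs leaving i ≥ 1
  have hsrcb : ∀ a ∈ P.arcs, a.1 ≠ 0 → 1 ≤ a.1 ∧ a.1 ≤ P.L - 1 := by
    intro a ha h0
    have := P.ca_src_lt ha
    omega
  -- the multilayered flow
  set xml : (ℕ × ℕ) × ℕ × ℕ → ℝ := fun b =>
    if b.1.1 = 0 then x (P.proj b)
    else Y b.1.1 b.1.2 (P.caCol b) * x (P.proj b) / T b.1.1 (P.caCol b) with hxml
  -- fiber sums
  have hx : ∀ a ∈ P.arcs, x a = ∑ b ∈ P.mlArcs.filter (fun b => P.proj b = a), xml b := by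
    intro a ha
    by_cases ha1 : a.1 = 0
    · -- the fiber is the single source arc
      have haitem : P.IsItemArc a := by
        rw [P.mem_arcs] at ha
        rcases ha with hi | ⟨_, _, h3, _⟩
        · exact hi
        · omega
      obtain ⟨h1, h2, h3, u, hu1, hu2⟩ := haitem
      have hQ3 := Finset.mem_Icc.1 h3
      have hsingle : P.mlArcs.filter (fun b => P.proj b = a) = {((0, 0), (a.2.1, a.2.2))} := by
        apply Finset.ext
        intro b
        simp only [Finset.mem_filter, Finset.mem_singleton]
        constructor
        · rintro ⟨hb, hpb⟩
          have hb11 : b.1.1 = 0 := by rw [show b.1.1 = (P.proj b).1 from rfl, hpb]; exact ha1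
          have hb1 : b.1 = (0, 0) := P.ml_src_char hb hb11
          have hcc : P.caCol b = a.2.2 := by rw [show P.caCol b = (P.proj b).2.2 from rfl, hpb]
          have hccQ : P.caCol b ≠ P.Q + 1 := by rw [hcc]; exact P.colQ1 h3
          have hb22 : b.2.2 = a.2.2 := by rw [← P.ml_col_target hb hccQ]; exact hcc
          have hb21 : b.2.1 = a.2.1 := by rw [show b.2.1 = (P.proj b).2.1 from rfl, hpb]
          rw [Prod.ext_iff, Prod.ext_iff, Prod.ext_iff]
          exact ⟨⟨by rw [hb1], by rw [hb1]⟩, hb21, hb22⟩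
        · rintro rfl
          constructor
          · rw [P.mem_mlArcs]
            exact Or.inl ⟨rfl, u, by show P.len u = a.2.1; omega, hu2⟩
          · have hne : (((0:ℕ), (0:ℕ)), (a.2.1, a.2.2)).2.2 ≠ (((0:ℕ), (0:ℕ)), (a.2.1, a.2.2)).1.2 := by
              show a.2.2 ≠ 0
              omega
            rw [proj, P.caCol_item hne]
            show ((0:ℕ), a.2.1, a.2.2) = a
            rw [Prod.ext_iff, Prod.ext_iff]
            exact ⟨ha1.symm, rfl, rfl⟩
      rw [hsingle, Finset.sum_singleton, hxml]
      simp only [if_pos rfl]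
      congr 1
      have hne : (((0:ℕ), (0:ℕ)), (a.2.1, a.2.2)).2.2 ≠ (((0:ℕ), (0:ℕ)), (a.2.1, a.2.2)).1.2 := by
        show a.2.2 ≠ 0; omega
      rw [proj, P.caCol_item hne]
      rw [Prod.ext_iff, Prod.ext_iff]
      exact ⟨ha1, rfl, rfl⟩
    · -- interior vertex: fiber indexed by the layers ≠ a.2.2
      obtain ⟨hi1, hi2⟩ := hsrcb a ha ha1
      have hcolm := P.ca_col_mem ha
      have e1 : ∑ b ∈ P.mlArcs.filter (fun b => P.proj b = a), xml b =
          ∑ q' ∈ (Finset.Icc 1 P.Q).filter (fun q' => q' ≠ a.2.2),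
            Y a.1 q' a.2.2 * x a / T a.1 a.2.2 := by
        apply Finset.sum_nbij' (i := fun b => b.1.2) (j := fun q' => P.psi a q')
        · intro b hb
          obtain ⟨hb1, hb2⟩ := Finset.mem_filter.1 hb
          have hb11 : b.1.1 ≠ 0 := by
            rw [show b.1.1 = (P.proj b).1 from rfl, hb2]; exact ha1
          refine Finset.mem_filter.2 ⟨(P.ml_layer_bounds hb1 hb11).2.2, ?_⟩
          have := P.ml_from_layer hb1 hb11
          rw [show P.caCol b = (P.proj b).2.2 from rfl, hb2] at this
          exact fun he => this he.symm
        · intro q' hq'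
          obtain ⟨hq1, hq2⟩ := Finset.mem_filter.1 hq'
          obtain ⟨hm, hp⟩ := P.psi_spec ha ha1 hq1 hq2
          exact Finset.mem_filter.2 ⟨hm, hp⟩
        · intro b hb
          obtain ⟨hb1, hb2⟩ := Finset.mem_filter.1 hb
          rw [← hb2]
          exact P.psi_proj hb1
        · intro q' _
          rfl
        · intro b hb
          obtain ⟨hb1, hb2⟩ := Finset.mem_filter.1 hb
          have hb11 : b.1.1 ≠ 0 := by
            rw [show b.1.1 = (P.proj b).1 from rfl, hb2]; exact ha1
          simp only [hxml]
          simp only [if_neg hb11]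
          rw [show b.1.1 = (P.proj b).1 from rfl,
            show P.caCol b = (P.proj b).2.2 from rfl, hb2]
      rw [e1]
      have e2 : ∑ q' ∈ (Finset.Icc 1 P.Q).filter (fun q' => q' ≠ a.2.2),
            Y a.1 q' a.2.2 * x a / T a.1 a.2.2 =
          ∑ q' ∈ Finset.Icc 1 P.Q, Y a.1 q' a.2.2 * x a / T a.1 a.2.2 := by
        apply Finset.sum_filter_of_ne
        intro q' _ hne heq
        rw [heq, hYd' a.1 a.2.2] at hne
        simp at hne
      rw [e2, ← Finset.sum_div, ← Finset.sum_mul, hYc' a.1 hi1 hi2 a.2.2 hcolm]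
      by_cases hT0 : T a.1 a.2.2 = 0
      · rw [hT0, hTzero a.1 a.2.2 hT0 a ha rfl rfl]
        simp
      · rw [mul_comm, mul_div_assoc, div_self hT0, mul_one]
  have key := P.sum_proj xml x hx
  -- basic emptiness facts
  have hinflow0 : P.inflow x 0 = 0 := by
    rw [inflow, Finset.filter_eq_empty_iff.2 (fun {a} ha h0 => P.ca_tgt_pos ha h0),
      Finset.sum_empty]
  have houtL : P.outflow x P.L = 0 := by
    rw [outflow, Finset.filter_eq_empty_iff.2 ?_, Finset.sum_empty]
    intro a ha hL'
    have := P.ca_src_lt ha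
    omega
  refine ⟨xml, ?_, h.znonneg, ?_, ?_, ?_, ?_⟩
  · -- nonneg
    intro b hb
    simp only [hxml]
    split
    · exact h.nonneg _ (P.proj_mem hb)
    · exact div_nonneg (mul_nonneg (hY0' _ _ _) (h.nonneg _ (P.proj_mem hb))) (hTnn _ _)
  · -- source
    rw [mlOut]
    have e : P.mlArcs.filter (fun b => b.1 = ((0:ℕ), (0:ℕ))) =
        P.mlArcs.filter (fun b => (P.proj b).1 = 0) := by
      apply Finset.filter_congr
      intro b hb
      constructor
      · intro h1; rw [show (P.proj b).1 = b.1.1 from rfl, h1]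
      · intro h1; exact P.ml_src_char hb h1
    rw [e, ← key (fun a => a.1 = 0)]
    have : P.outflow x 0 = z := by
      have := h.flow_source
      rw [hinflow0] at this
      linarith
    rw [← this, outflow]
  · -- mid
    intro j q hj1 hj2 hq
    have hjL : j ≠ P.L := by omega
    have hj0 : j ≠ 0 := by omega
    -- incoming flow equals inflowC
    have ein : P.mlIn xml (j, q) = P.inflowC x j q := by
      rw [mlIn]
      have e : P.mlArcs.filter (fun b => b.2 = (j, q)) =
          P.mlArcs.filter (fun b => (P.proj b).2.1 = j ∧ (P.proj b).2.2 = q) := by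
        apply Finset.filter_congr
        intro b hb
        rw [Prod.ext_iff]
        show b.2.1 = j ∧ b.2.2 = q ↔ b.2.1 = j ∧ P.caCol b = q
        constructor
        · rintro ⟨h1, h2⟩
          refine ⟨h1, ?_⟩
          rw [P.ml_col_target hb ?_, h2]
          intro hcQ
          have hbb := P.caCol_loss hb hcQ
          rw [P.mem_mlArcs] at hb
          rcases hb with ⟨hb1, u, _, hu2⟩ | ⟨_, _, _, _, h5, _⟩ | ⟨_, _, h6, _⟩
          · have hcu := Finset.mem_Icc.1 (P.hcol u)
            have hb12 : b.1.2 = 0 := by rw [hb1]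
            omega
          · exact h5 hbb
          · exact hjL (h1 ▸ h6)
        · rintro ⟨h1, h2⟩
          refine ⟨h1, ?_⟩
          rw [← h2]
          apply (P.ml_col_target hb ?_).symm
          intro hcQ
          rw [hcQ] at h2
          have := Finset.mem_Icc.1 hq
          omega
      rw [e, ← key (fun a => a.2.1 = j ∧ a.2.2 = q), inflowC]
    -- outgoing flow equals inflowC as well
    have eout : P.mlOut xml (j, q) = P.inflowC x j q := by
      rw [mlOut]
      have e1 : ∑ b ∈ P.mlArcs.filter (fun b => b.1 = (j, q)), xml b =
          ∑ a ∈ P.arcs.filter (fun a => a.1 = j ∧ a.2.2 ≠ q),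
            Y j q a.2.2 * x a / T j a.2.2 := by
        apply Finset.sum_nbij' (i := fun b => P.proj b) (j := fun a => P.psi a q)
        · intro b hb
          obtain ⟨hb1, hb2⟩ := Finset.mem_filter.1 hb
          have hb11 : b.1.1 = j := by rw [hb2]
          have hb12 : b.1.2 = q := by rw [hb2]
          refine Finset.mem_filter.2 ⟨P.proj_mem hb1, hb11, ?_⟩
          have := P.ml_from_layer hb1 (by omega)
          rw [hb12] at this
          exact this
        · intro a ha'
          obtain ⟨ha1, ha2, ha3⟩ := Finset.mem_filter.1 ha'
          obtain ⟨hm, hp⟩ := P.psi_spec ha1 (by omega) hq (fun he => ha3 he.symm)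
          refine Finset.mem_filter.2 ⟨hm, ?_⟩
          show ((a.1, q), _).1 = (j, q)
          rw [ha2]
        · intro b hb
          obtain ⟨hb1, hb2⟩ := Finset.mem_filter.1 hb
          have hb12 : b.1.2 = q := by rw [hb2]
          rw [← hb12]
          exact P.psi_proj hb1
        · intro a ha'
          obtain ⟨ha1, ha2, ha3⟩ := Finset.mem_filter.1 ha'
          exact (P.psi_spec ha1 (by omega) hq (fun he => ha3 he.symm)).2
        · intro b hb
          obtain ⟨hb1, hb2⟩ := Finset.mem_filter.1 hb
          have hb11 : b.1.1 = j := by rw [hb2]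
          have hb12 : b.1.2 = q := by rw [hb2]
          simp only [hxml]
          simp only [if_neg (show ¬ b.1.1 = 0 by omega)]
          rw [hb11, hb12,
            show P.caCol b = (P.proj b).2.2 from rfl]
      rw [e1]
      have e2 : ∑ a ∈ P.arcs.filter (fun a => a.1 = j ∧ a.2.2 ≠ q),
            Y j q a.2.2 * x a / T j a.2.2 =
          ∑ a ∈ P.arcs.filter (fun a => a.1 = j), Y j q a.2.2 * x a / T j a.2.2 := by
        rw [show P.arcs.filter (fun a => a.1 = j ∧ a.2.2 ≠ q) =
            (P.arcs.filter (fun a => a.1 = j)).filter (fun a => a.2.2 ≠ q) by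
          rw [Finset.filter_filter]]
        apply Finset.sum_filter_of_ne
        intro a _ hne heq
        rw [heq, hYd' j q] at hne
        simp at hne
      rw [e2, ← Finset.sum_fiberwise_of_maps_to (g := fun a => a.2.2)
        (t := Finset.Icc 1 (P.Q + 1))
        (fun a ha => P.ca_col_mem (Finset.mem_filter.1 ha).1)
        (fun a => Y j q a.2.2 * x a / T j a.2.2)]
      have e3 : ∀ k ∈ Finset.Icc 1 (P.Q + 1),
          ∑ a ∈ (P.arcs.filter (fun a => a.1 = j)).filter (fun a => a.2.2 = k),
            Y j q a.2.2 * x a / T j a.2.2 = Y j q k := by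
        intro k hk
        have : ∀ a ∈ (P.arcs.filter (fun a => a.1 = j)).filter (fun a => a.2.2 = k),
            Y j q a.2.2 * x a / T j a.2.2 = Y j q k * x a / T j k := by
          intro a ha'
          rw [(Finset.mem_filter.1 ha').2]
        rw [Finset.sum_congr rfl this]
        rw [show ((P.arcs.filter (fun a => a.1 = j)).filter (fun a => a.2.2 = k)) =
            P.arcs.filter (fun a => a.1 = j ∧ a.2.2 = k) by rw [Finset.filter_filter]]
        rw [← Finset.sum_div, ← Finset.mul_sum]
        have hTfold : ∑ a ∈ P.arcs.filter (fun a => a.1 = j ∧ a.2.2 = k), x a = T j k := rfl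
        rw [hTfold]
        by_cases hT0 : T j k = 0
        · rw [hT0, hYzero j hj1 hj2 q hq k hk hT0]
          simp
        · rw [mul_div_assoc, div_self hT0, mul_one]
      rw [Finset.sum_congr rfl e3, hYr' j hj1 hj2 q hq]
    exact ein.trans eout.symm
  · -- sink
    have h1 : ∑ a ∈ P.arcs.filter (fun a => a.2.1 = P.L), x a = z := by
      have h2 := h.flow_sink
      rw [houtL] at h2
      rw [inflow] at h2
      linarith
    exact (key (fun a => a.2.1 = P.L)).symm.trans h1
  · -- demand
    intro u
    have hcu : P.col u ≠ P.Q + 1 := P.colQ1 (P.hcol u)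
    have e : P.mlArcs.filter (fun b =>
          b.2.1 = b.1.1 + P.len u ∧ b.2.2 = P.col u ∧ b.1.2 ≠ P.col u) =
        P.mlArcs.filter (fun b =>
          (P.proj b).2.1 = (P.proj b).1 + P.len u ∧ (P.proj b).2.2 = P.col u) := by
      apply Finset.filter_congr
      intro b _
      show _ ↔ b.2.1 = b.1.1 + P.len u ∧ P.caCol b = P.col u
      constructor
      · rintro ⟨h1, h2, h3⟩
        have hd : b.2.2 ≠ b.1.2 := by rw [h2]; exact fun he => h3 he.symm
        exact ⟨h1, by rw [P.caCol_item hd]; exact h2⟩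
      · rintro ⟨h1, h2⟩
        by_cases hd : b.2.2 = b.1.2
        · exact absurd h2 (by simp only [caCol, if_pos hd]; exact fun he => hcu he.symm)
        · refine ⟨h1, by rw [← P.caCol_item hd]; exact h2, ?_⟩
          have h3 : b.2.2 = P.col u := by rw [← P.caCol_item hd]; exact h2
          rw [← h3]
          exact fun he => hd he.symm
    rw [e, ← key (fun a => a.2.1 = a.1 + P.len u ∧ a.2.2 = P.col u)]
    exact h.demand u

end CBPP

/-- The linear relaxations of AF_ml and AF_ca give the same lower bound: the infimum of `z`
over nonnegative real AF_ml-feasible solutions equals the infimum of `z` over nonnegative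
real AF_ca-feasible solutions. -/
theorem stmt_13 (P : CBPP) :
    sInf {z : ℝ | ∃ x : (ℕ × ℕ) × ℕ × ℕ → ℝ, P.AFmlFeasible x z} =
    sInf {z : ℝ | ∃ x : ℕ × ℕ × ℕ → ℝ, P.AFcaFeasible x z} := by
  congr 1
  ext z
  exact ⟨fun ⟨x, hx⟩ => P.ml_to_ca hx, fun ⟨x, hx⟩ => P.ca_to_ml hx⟩
end
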